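/- arXiv:1503.01818 — 7 statements merged into one kernel-verified Lean document; each statement's English description precedes it below -/
import Mathlib

section
/- Assume c_j > 0 and l_j > 0 for all j. If x₀ ∈ P is a critical point of f on P (i.e. ∇f(x₀) = μ·l for some μ ∈ ℝ) and x₀ is a local maximum of f on P, then x₀ has at most one strictly negative coordinate: the set {j : x₀_j < 0} has at most one element. -/
/-!
Since `x φ'' x < 0`, the function `φ` is strictly convex on `(-∞, 0]`. If `x₀ⱼ < 0` and `x₀ₖ < 0`
with `j ≠ k`, a small step `v = t (lₖ eⱼ - lⱼ eₖ)`, `t > 0`, stays in `P` and keeps both coordinates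
negative. By the tangent-line inequality for the strictly convex `φ`, the gain `f (x₀ + v) - f x₀`
strictly exceeds its first-order term `∑ cᵢ φ' (x₀ᵢ) vᵢ = μ ∑ lᵢ vᵢ = 0`, so `x₀` is not a local
maximum.
-/

open Set Filter Topology

lemma StrictConvexOn.add_deriv_mul_sub_lt {S : Set ℝ} {f : ℝ → ℝ} (hf : StrictConvexOn ℝ S f)
    {x y : ℝ} (hx : x ∈ S) (hy : y ∈ S) (hxy : x ≠ y) (hfd : DifferentiableAt ℝ f x) :
    f x + deriv f x * (y - x) < f y := by
  rcases hxy.lt_or_gt with hlt | hgt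
  · have := hf.deriv_lt_slope hx hy hlt hfd
    rw [slope_def_field, lt_div_iff₀ (sub_pos.2 hlt)] at this
    linarith
  · have := hf.slope_lt_deriv hy hx hgt hfd
    rw [slope_def_field, div_lt_iff₀ (sub_pos.2 hgt)] at this
    linarith

lemma strictConvexOn_Iic_zero_of_mul_deriv2_neg {φ : ℝ → ℝ} (hφ : Continuous φ)
    (hφ'' : ∀ x : ℝ, x ≠ 0 → x * deriv (deriv φ) x < 0) : StrictConvexOn ℝ (Iic 0) φ :=
  strictConvexOn_of_deriv2_pos (convex_Iic 0) hφ.continuousOn fun x hx => by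
    rw [interior_Iic] at hx
    exact pos_of_mul_neg_right (hφ'' x hx.ne) hx.le

lemma sum_mul_lt_sum_mul_add_of_strictConvexOn {ι : Type*} [Fintype ι] {S : Set ℝ} {φ : ℝ → ℝ}
    (hφ : StrictConvexOn ℝ S φ) {c l x v : ι → ℝ} {μ : ℝ} (hc : ∀ i, 0 < c i)
    (hdiff : ∀ i, DifferentiableAt ℝ φ (x i)) (hcrit : ∀ i, c i * deriv φ (x i) = μ * l i)
    (hlv : ∑ i, l i * v i = 0) (hS : ∀ i, v i ≠ 0 → x i ∈ S ∧ x i + v i ∈ S)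
    (hv : ∃ i, v i ≠ 0) :
    ∑ i, c i * φ (x i) < ∑ i, c i * φ (x i + v i) := by
  have hlin : ∀ i, c i * φ (x i) + μ * (l i * v i) = c i * (φ (x i) + deriv φ (x i) * v i) := by
    intro i; linear_combination v i * (hcrit i).symm
  have htangent : ∀ i, v i ≠ 0 → φ (x i) + deriv φ (x i) * v i < φ (x i + v i) := fun i hi => by
    simpa using hφ.add_deriv_mul_sub_lt (hS i hi).1 (hS i hi).2 (left_ne_add.2 hi) (hdiff i)
  calc ∑ i, c i * φ (x i) = ∑ i, (c i * φ (x i) + μ * (l i * v i)) := by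
        rw [Finset.sum_add_distrib, ← Finset.mul_sum, hlv, mul_zero, add_zero]
    _ < ∑ i, c i * φ (x i + v i) := by
        refine Finset.sum_lt_sum (fun i _ => ?_) ?_
        · rw [hlin]
          rcases eq_or_ne (v i) 0 with h | h
          · simp [h]
          · exact (mul_lt_mul_of_pos_left (htangent i h) (hc i)).le
        · obtain ⟨i, hi⟩ := hv
          refine ⟨i, Finset.mem_univ i, ?_⟩
          rw [hlin]
          exact mul_lt_mul_of_pos_left (htangent i hi) (hc i)

lemma sum_mul_single_sub_single_eq_zero {ι : Type*} [Fintype ι] [DecidableEq ι] (l : ι → ℝ)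
    (j k : ι) : ∑ i, l i * (Pi.single j (l k) - Pi.single k (l j) : ι → ℝ) i = 0 := by
  simp [mul_sub, Finset.sum_sub_distrib, Pi.single_apply, mul_comm]

lemma eventually_sum_mul_lt_sum_mul_add_exchange {ι : Type*} [Fintype ι] [DecidableEq ι]
    {φ : ℝ → ℝ} (hφ : StrictConvexOn ℝ (Iic 0) φ) (hdiff : Differentiable ℝ φ) {c l x : ι → ℝ}
    {μ : ℝ} (hc : ∀ i, 0 < c i) (hl : ∀ i, 0 < l i) (hcrit : ∀ i, c i * deriv φ (x i) = μ * l i)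
    {j k : ι} (hjk : j ≠ k) (hj : x j < 0) (hk : x k < 0) :
    ∀ᶠ t in 𝓝[>] 0, ∑ i, c i * φ (x i) <
      ∑ i, c i * φ (x i + t * (Pi.single j (l k) - Pi.single k (l j) : ι → ℝ) i) := by
  set d : ι → ℝ := Pi.single j (l k) - Pi.single k (l j)
  have hlv : ∀ t : ℝ, ∑ i, l i * (t * d i) = 0 := fun t => by
    simp_rw [mul_left_comm _ t, ← Finset.mul_sum, d, sum_mul_single_sub_single_eq_zero, mul_zero]
  have hj_small : ∀ᶠ t in 𝓝 (0 : ℝ), x j + t * l k < 0 :=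
    (Continuous.continuousAt (by fun_prop)).eventually_lt continuousAt_const (by simpa using hj)
  filter_upwards [nhdsWithin_le_nhds hj_small, self_mem_nhdsWithin] with t htj (ht : 0 < t)
  refine sum_mul_lt_sum_mul_add_of_strictConvexOn hφ hc (fun i => hdiff _) hcrit (hlv t)
    (fun i hi => ?_) ⟨j, by simp [d, hjk, ht.ne', (hl k).ne']⟩
  by_cases hij : i = j
  · subst hij; simpa [d, hjk] using ⟨hj.le, htj.le⟩
  by_cases hik : i = k
  · subst hik
    have : 0 < t * l j := mul_pos ht (hl j)
    simp only [d, Pi.sub_apply, Pi.single_eq_same, Pi.single_eq_of_ne hij, mem_Iic]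
    constructor <;> linarith
  · simp [d, hij, hik] at hi

theorem stmt_2_general (n : ℕ) (φ : ℝ → ℝ)
    (hφ' : ∀ x : ℝ, 0 < deriv φ x)
    (hφ'' : ∀ x : ℝ, x ≠ 0 → x * deriv (deriv φ) x < 0)
    (c l : Fin n → ℝ) (hc : ∀ j, 0 < c j) (hl : ∀ j, 0 < l j) (b : ℝ)
    (f : EuclideanSpace ℝ (Fin n) → ℝ)
    (hf : ∀ x : EuclideanSpace ℝ (Fin n), f x = ∑ i, c i * φ (x i))
    (P : Set (EuclideanSpace ℝ (Fin n)))
    (hP : P = {x : EuclideanSpace ℝ (Fin n) | ∑ j, l j * x j = b})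
    (x₀ : EuclideanSpace ℝ (Fin n)) (hx₀P : x₀ ∈ P)
    (μ : ℝ) (hcrit : ∀ j, c j * deriv φ (x₀ j) = μ * l j)
    (hmax : ∃ ε > 0, ∀ x ∈ P, ‖x - x₀‖ < ε → f x ≤ f x₀) :
    ∀ j k : Fin n, x₀ j < 0 → x₀ k < 0 → j = k := by
  intro j k hj hk
  by_contra hjk
  obtain ⟨ε, hε, hloc⟩ := hmax
  -- `deriv φ x = 0` wherever `φ` is not differentiable, so `0 < deriv φ` forces differentiability.
  have hdiff : Differentiable ℝ φ := fun x => differentiableAt_of_deriv_ne_zero (hφ' x).ne'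
  have hgain := eventually_sum_mul_lt_sum_mul_add_exchange
    (strictConvexOn_Iic_zero_of_mul_deriv2_neg hdiff.continuous hφ'') hdiff hc hl hcrit hjk hj hk
  set d : EuclideanSpace ℝ (Fin n) := WithLp.toLp 2 (Pi.single j (l k) - Pi.single k (l j))
  have hld : ∑ i, l i * d i = 0 := sum_mul_single_sub_single_eq_zero l j k
  have hsmall : ∀ᶠ t in 𝓝 (0 : ℝ), ‖t • d‖ < ε :=
    (Continuous.continuousAt (by fun_prop)).eventually_lt continuousAt_const (by simpa using hε)
  obtain ⟨t, hft, htε⟩ := (hgain.and (nhdsWithin_le_nhds hsmall)).exists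
  have hmem : x₀ + t • d ∈ P := by
    rw [hP] at hx₀P ⊢
    simp only [Set.mem_ofPred_eq, PiLp.add_apply, PiLp.smul_apply, smul_eq_mul, mul_add,
      Finset.sum_add_distrib, mul_left_comm _ t, ← Finset.mul_sum, hld, mul_zero, add_zero]
    exact hx₀P
  refine (hloc _ hmem (by simpa using htε)).not_gt ?_
  simpa [hf, d, Pi.single_apply] using hft

/-- Under assumption (A1) on `φ`, with `cⱼ > 0` and `lⱼ > 0` for all `j`,
any critical point `x₀` of `f` on `P` which is a local maximum of `f` on `P` has at
most one strictly negative coordinate. -/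
theorem stmt_2 (n : ℕ) (φ : ℝ → ℝ)
    (hφC : ContDiff ℝ 2 φ)
    (hodd : ∀ x : ℝ, φ (-x) = -φ x)
    (hφ' : ∀ x : ℝ, 0 < deriv φ x)
    (hφ'' : ∀ x : ℝ, x ≠ 0 → x * deriv (deriv φ) x < 0)
    (hlim : ∃ L : ℝ, Filter.Tendsto φ Filter.atTop (nhds L))
    (c l : Fin n → ℝ) (hc : ∀ j, 0 < c j) (hl : ∀ j, 0 < l j) (b : ℝ)
    (f : EuclideanSpace ℝ (Fin n) → ℝ)
    (hf : ∀ x : EuclideanSpace ℝ (Fin n), f x = ∑ i, c i * φ (x i))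
    (P : Set (EuclideanSpace ℝ (Fin n)))
    (hP : P = {x : EuclideanSpace ℝ (Fin n) | ∑ j, l j * x j = b})
    (x₀ : EuclideanSpace ℝ (Fin n)) (hx₀P : x₀ ∈ P)
    (μ : ℝ) (hcrit : ∀ j, c j * deriv φ (x₀ j) = μ * l j)
    (hmax : ∃ ε > 0, ∀ x ∈ P, ‖x - x₀‖ < ε → f x ≤ f x₀) :
    ∀ j k : Fin n, x₀ j < 0 → x₀ k < 0 → j = k :=
  stmt_2_general n φ hφ' hφ'' c l hc hl b f hf P hP x₀ hx₀P μ hcrit hmax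
end

section
/- Assume c_j > 0 for all j. Then f has at most one local maximum point on P in the open main orthant: if x₀ and x₁ are both local maxima of f on P and all coordinates of x₀ and of x₁ are strictly positive, then x₀ = x₁. -/
/-!
Since `φ'' < 0` on `(0, ∞)`, `φ` is strictly concave on `[0, ∞)`, so with positive weights `f` is
strictly concave on the convex set `P ∩ [0, ∞)ⁿ`. A local maximum of a concave function on a convex set is a
global one, and a strictly concave function has at most one global maximum.
-/

open Set

theorem StrictConcaveOn.eq_of_isLocalMaxOn {E β : Type*} [AddCommGroup E] [TopologicalSpace E]
    [Module ℝ E] [IsTopologicalAddGroup E] [ContinuousSMul ℝ E] [AddCommGroup β] [PartialOrder β]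
    [IsOrderedAddMonoid β] [Module ℝ β] [IsOrderedModule ℝ β] [PosSMulReflectLE ℝ β]
    {s : Set E} {f : E → β} {x y : E} (hf : StrictConcaveOn ℝ s f)
    (hfx : IsLocalMaxOn f s x) (hfy : IsLocalMaxOn f s y) (hx : x ∈ s) (hy : y ∈ s) : x = y :=
  hf.eq_of_isMaxOn (.of_isLocalMaxOn_of_concaveOn hx hfx hf.concaveOn)
    (.of_isLocalMaxOn_of_concaveOn hy hfy hf.concaveOn) hx hy

theorem isLocalMaxOn_of_forall_norm_sub_lt {E : Type*} [SeminormedAddCommGroup E] {f : E → ℝ}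
    {s : Set E} {a : E} (h : ∃ ε > 0, ∀ x ∈ s, ‖x - a‖ < ε → f x ≤ f a) :
    IsLocalMaxOn f s a := by
  obtain ⟨ε, hε, hmax⟩ := h
  refine eventually_nhdsWithin_iff.2 (Metric.eventually_nhds_iff.2 ⟨ε, hε, fun x hx hxs => ?_⟩)
  exact hmax x hxs (by rwa [← dist_eq_norm])

namespace EuclideanSpace

variable {ι : Type*}

theorem convex_setOf_sum_mul_eq [Fintype ι] (l : ι → ℝ) (b : ℝ) :
    Convex ℝ {x : EuclideanSpace ℝ ι | ∑ j, l j * x j = b} :=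
  convex_hyperplane
    ⟨fun x y => by simp only [PiLp.add_apply, mul_add, Finset.sum_add_distrib],
      fun a x => by simp only [PiLp.smul_apply, smul_eq_mul, Finset.mul_sum, mul_left_comm]⟩ b

theorem convex_setOf_forall_mem {s : Set ℝ} (hs : Convex ℝ s) :
    Convex ℝ {x : EuclideanSpace ℝ ι | ∀ i, x i ∈ s} :=
  fun _ hx _ hy _ _ ha hb hab i => by
    simpa only [PiLp.add_apply, PiLp.smul_apply] using hs (hx i) (hy i) ha hb hab

theorem strictConcaveOn_sum_mul_comp_apply [Fintype ι] {s : Set ℝ} {φ : ℝ → ℝ} (hφ : StrictConcaveOn ℝ s φ)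
    {c : ι → ℝ} (hc : ∀ i, 0 < c i) :
    StrictConcaveOn ℝ {x : EuclideanSpace ℝ ι | ∀ i, x i ∈ s} (fun x => ∑ i, c i * φ (x i)) := by
  refine ⟨convex_setOf_forall_mem hφ.1, fun x hx y hy hxy a b ha hb hab => ?_⟩
  obtain ⟨i₀, hi₀⟩ : ∃ i, x i ≠ y i := by
    by_contra! h
    exact hxy (PiLp.ext h)
  have hterm : ∀ i, a * (c i * φ (x i)) + b * (c i * φ (y i)) ≤ c i * φ (a * x i + b * y i) :=
    fun i => by
      have := hφ.concaveOn.2 (hx i) (hy i) ha.le hb.le hab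
      simp only [smul_eq_mul] at this
      nlinarith [hc i]
  have hterm₀ : a * (c i₀ * φ (x i₀)) + b * (c i₀ * φ (y i₀))
      < c i₀ * φ (a * x i₀ + b * y i₀) := by
    have := hφ.2 (hx i₀) (hy i₀) hi₀ ha hb hab
    simp only [smul_eq_mul] at this
    nlinarith [hc i₀]
  simp only [smul_eq_mul, PiLp.add_apply, PiLp.smul_apply, Finset.mul_sum,
    ← Finset.sum_add_distrib]
  exact Finset.sum_lt_sum (fun i _ => hterm i) ⟨i₀, Finset.mem_univ _, hterm₀⟩

end EuclideanSpace

theorem stmt_3_general (n : ℕ) (φ : ℝ → ℝ)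
    (hφC : ContDiff ℝ 2 φ)
    (hφ'' : ∀ x : ℝ, x ≠ 0 → x * deriv (deriv φ) x < 0)
    (c l : Fin n → ℝ) (hc : ∀ j, 0 < c j) (b : ℝ)
    (f : EuclideanSpace ℝ (Fin n) → ℝ)
    (hf : ∀ x : EuclideanSpace ℝ (Fin n), f x = ∑ i, c i * φ (x i))
    (P : Set (EuclideanSpace ℝ (Fin n)))
    (hP : P = {x : EuclideanSpace ℝ (Fin n) | ∑ j, l j * x j = b})
    (x₀ x₁ : EuclideanSpace ℝ (Fin n)) (hx₀P : x₀ ∈ P) (hx₁P : x₁ ∈ P)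
    (hpos₀ : ∀ j, 0 < x₀ j) (hpos₁ : ∀ j, 0 < x₁ j)
    (hmax₀ : ∃ ε > 0, ∀ x ∈ P, ‖x - x₀‖ < ε → f x ≤ f x₀)
    (hmax₁ : ∃ ε > 0, ∀ x ∈ P, ‖x - x₁‖ < ε → f x ≤ f x₁) :
    x₀ = x₁ := by
  have hφ : StrictConcaveOn ℝ (Ici 0) φ := by
    refine strictConcaveOn_of_deriv2_neg (convex_Ici 0) hφC.continuous.continuousOn fun x hx => ?_
    rw [interior_Ici] at hx
    have := hφ'' x (ne_of_gt hx)
    rw [Function.iterate_succ_apply, Function.iterate_one]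
    nlinarith [mem_Ioi.1 hx]
  set Q := P ∩ {x : EuclideanSpace ℝ (Fin n) | ∀ i, x i ∈ Ici 0}
  have hQ : Convex ℝ Q :=
    (hP ▸ EuclideanSpace.convex_setOf_sum_mul_eq l b).inter
      (EuclideanSpace.convex_setOf_forall_mem (convex_Ici 0))
  have hfQ : StrictConcaveOn ℝ Q f := by
    rw [funext hf]
    exact (EuclideanSpace.strictConcaveOn_sum_mul_comp_apply hφ hc).subset inter_subset_right hQ
  exact hfQ.eq_of_isLocalMaxOn
    ((isLocalMaxOn_of_forall_norm_sub_lt hmax₀).on_subset inter_subset_left)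
    ((isLocalMaxOn_of_forall_norm_sub_lt hmax₁).on_subset inter_subset_left)
    ⟨hx₀P, fun i => (hpos₀ i).le⟩ ⟨hx₁P, fun i => (hpos₁ i).le⟩

/-- Under assumption (A1) on `φ`, with `cⱼ > 0` for all `j`, the function
`f(x) = ∑ cᵢ φ(xᵢ)` has at most one local maximum point on the hyperplane `P` in the
open main orthant: two such local maxima with all coordinates strictly positive coincide. -/
theorem stmt_3 (n : ℕ) (φ : ℝ → ℝ)
    (hφC : ContDiff ℝ 2 φ)
    (hodd : ∀ x : ℝ, φ (-x) = -φ x)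
    (hφ' : ∀ x : ℝ, 0 < deriv φ x)
    (hφ'' : ∀ x : ℝ, x ≠ 0 → x * deriv (deriv φ) x < 0)
    (hlim : ∃ L : ℝ, Filter.Tendsto φ Filter.atTop (nhds L))
    (c l : Fin n → ℝ) (hc : ∀ j, 0 < c j) (hl : l ≠ 0) (b : ℝ)
    (f : EuclideanSpace ℝ (Fin n) → ℝ)
    (hf : ∀ x : EuclideanSpace ℝ (Fin n), f x = ∑ i, c i * φ (x i))
    (P : Set (EuclideanSpace ℝ (Fin n)))
    (hP : P = {x : EuclideanSpace ℝ (Fin n) | ∑ j, l j * x j = b})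
    (x₀ x₁ : EuclideanSpace ℝ (Fin n)) (hx₀P : x₀ ∈ P) (hx₁P : x₁ ∈ P)
    (hpos₀ : ∀ j, 0 < x₀ j) (hpos₁ : ∀ j, 0 < x₁ j)
    (hmax₀ : ∃ ε > 0, ∀ x ∈ P, ‖x - x₀‖ < ε → f x ≤ f x₀)
    (hmax₁ : ∃ ε > 0, ∀ x ∈ P, ‖x - x₁‖ < ε → f x ≤ f x₁) :
    x₀ = x₁ :=
  stmt_3_general n φ hφC hφ'' c l hc b f hf P hP x₀ x₁ hx₀P hx₁P hpos₀ hpos₁ hmax₀ hmax₁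
end

section
/- Assume c_j > 0 and l_j > 0 for all j and set q_j = l_j/c_j. (i) If x₀ ∈ P has all coordinates strictly positive and is a local maximum of f on P, then there exists β > 0 such that β·q_j < φ'(0) and x₀_j = ψ(β q_j) for every j, and ∑_{j=1}^n l_j ψ(β q_j) = b. (ii) Conversely, if β > 0 satisfies β·q_j < φ'(0) for all j and ∑_{j=1}^n l_j ψ(β q_j) = b, then the point x₀ with coordinates x₀_j = ψ(β q_j) is a local maximum of f on P. -/
/-!
(i) is the Lagrange condition: moving from `x₀` along `l k • eᵢ - l i • eₖ` stays in `P`, so the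
derivative of `f` in that direction vanishes, i.e. `cᵢ φ'(x₀ᵢ) / lᵢ` does not depend on `i`; call it
`β`, so that `φ'(x₀ⱼ) = β qⱼ`. (ii) Since `φ'' < 0` on `(0, ∞)`, `φ` is concave on `[0, ∞)`, and
summing its tangent-line inequalities at the `x₀ⱼ` with weights `cⱼ` gives
`f x ≤ f x₀ + β (∑ lⱼ xⱼ - ∑ lⱼ x₀ⱼ) = f x₀` for `x ∈ P` in the closed positive orthant, which is a
neighbourhood of `x₀`.
-/

open Set Filter Topology Finset

lemma deriv_strictAntiOn_Ici_of_deriv_deriv_neg {φ : ℝ → ℝ} (hφ : ContDiff ℝ 2 φ)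
    (h : ∀ x, 0 < x → deriv (deriv φ) x < 0) : StrictAntiOn (deriv φ) (Ici 0) :=
  strictAntiOn_of_deriv_neg (convex_Ici 0) (hφ.continuous_deriv one_le_two).continuousOn
    fun x hx => h x (by rwa [interior_Ici] at hx)

lemma ConcaveOn.le_add_deriv_mul_sub {S : Set ℝ} {f : ℝ → ℝ} (hf : ConcaveOn ℝ S f) {x y : ℝ}
    (hx : x ∈ S) (hy : y ∈ S) (hd : DifferentiableAt ℝ f x) :
    f y ≤ f x + deriv f x * (y - x) := by
  rcases lt_trichotomy x y with hxy | rfl | hxy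
  · have := hf.slope_le_deriv hx hy hxy hd
    rw [slope_def_field, div_le_iff₀ (sub_pos.2 hxy)] at this
    linarith
  · simp
  · have := hf.deriv_le_slope hy hx hxy hd
    rw [slope_def_field, le_div_iff₀ (sub_pos.2 hxy)] at this
    linarith

lemma isLocalMaxOn_iff_exists_norm_sub_lt {E β : Type*} [SeminormedAddCommGroup E] [Preorder β]
    {f : E → β} {s : Set E} {a : E} :
    IsLocalMaxOn f s a ↔ ∃ ε > 0, ∀ x ∈ s, ‖x - a‖ < ε → f x ≤ f a := by
  simp only [IsLocalMaxOn, IsMaxFilter, Metric.nhdsWithin_basis_ball.eventually_iff, mem_inter_iff,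
    Metric.mem_ball, dist_eq_norm, and_imp]
  exact exists_congr fun _ => and_congr_right fun _ =>
    ⟨fun h x hx hxa => h hxa hx, fun h x hxa hx => h x hx hxa⟩

lemma exists_pos_forall_eq_mul_of_mul_eq_mul {ι : Type*} {w l : ι → ℝ} (hw : ∀ j, 0 < w j)
    (hl : ∀ j, 0 < l j) (h : ∀ i k, w i * l k = w k * l i) : ∃ β > 0, ∀ j, w j = β * l j := by
  cases isEmpty_or_nonempty ι with
  | inl _ => exact ⟨1, one_pos, isEmptyElim⟩
  | inr hne =>
    obtain ⟨i⟩ := hne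
    refine ⟨w i / l i, div_pos (hw i) (hl i), fun j => ?_⟩
    rw [div_mul_eq_mul_div, eq_div_iff (hl i).ne', h]

section

variable {ι : Type*} [Fintype ι] {φ : ℝ → ℝ} {c l : ι → ℝ}

lemma sum_mul_deriv_mul_eq_zero_of_isLocalMaxOn (hφ : Differentiable ℝ φ)
    {b : ℝ} {x₀ v : EuclideanSpace ℝ ι} (hx₀ : ∑ j, l j * x₀ j = b) (hv : ∑ j, l j * v j = 0)
    (hmax : IsLocalMaxOn (fun x : EuclideanSpace ℝ ι => ∑ i, c i * φ (x i))
      {x | ∑ j, l j * x j = b} x₀) :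
    ∑ i, c i * deriv φ (x₀ i) * v i = 0 := by
  have hline : IsLocalMax (fun t : ℝ => ∑ i, c i * φ (x₀ i + t * v i)) 0 := by
    have hmaps : univ ⊆ (fun t : ℝ => x₀ + t • v) ⁻¹' {x | ∑ j, l j * x j = b} := fun t _ => by
      simp only [Set.mem_preimage, Set.mem_ofPred_eq, PiLp.add_apply, PiLp.smul_apply, smul_eq_mul,
        mul_add, sum_add_distrib, hx₀, mul_left_comm _ t, ← mul_sum, hv, mul_zero, add_zero]
    have := IsLocalMaxOn.comp_continuousOn (b := 0) (by rwa [zero_smul, add_zero]) hmaps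
      (by fun_prop) (mem_univ 0)
    simpa only [Function.comp_def, PiLp.add_apply, PiLp.smul_apply, smul_eq_mul,
      isLocalMaxOn_univ_iff] using this
  refine hline.hasDerivAt_eq_zero (HasDerivAt.fun_sum fun i _ => ?_)
  rw [mul_assoc]
  refine HasDerivAt.const_mul _ ?_
  have hlin : HasDerivAt (fun t : ℝ => x₀ i + t * v i) (v i) 0 := by
    simpa using ((hasDerivAt_id (0 : ℝ)).mul_const (v i)).const_add (x₀ i)
  exact (hφ _).hasDerivAt.comp_of_eq 0 hlin (by simp)

lemma mul_deriv_mul_eq_of_isLocalMaxOn [DecidableEq ι] (hφ : Differentiable ℝ φ)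
    {b : ℝ} {x₀ : EuclideanSpace ℝ ι} (hx₀ : ∑ j, l j * x₀ j = b)
    (hmax : IsLocalMaxOn (fun x : EuclideanSpace ℝ ι => ∑ i, c i * φ (x i))
      {x | ∑ j, l j * x j = b} x₀) (i k : ι) :
    c i * deriv φ (x₀ i) * l k = c k * deriv φ (x₀ k) * l i := by
  set v : EuclideanSpace ℝ ι := l k • EuclideanSpace.single i 1 - l i • EuclideanSpace.single k 1
  have hpair (w : ι → ℝ) : ∑ j, w j * v j = l k * w i - l i * w k := by
    simp only [v, PiLp.sub_apply, PiLp.smul_apply, PiLp.single_apply, smul_eq_mul, mul_ite,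
      mul_one, mul_zero, mul_sub, sum_sub_distrib, sum_ite_eq', Finset.mem_univ, ↓reduceIte]
    ring
  have key := sum_mul_deriv_mul_eq_zero_of_isLocalMaxOn hφ hx₀ (by rw [hpair]; ring) hmax
  rw [hpair] at key
  linear_combination key

lemma isLocalMaxOn_of_forall_nonneg_le {f : EuclideanSpace ℝ ι → ℝ} {s : Set (EuclideanSpace ℝ ι)}
    {x₀ : EuclideanSpace ℝ ι} (hx₀ : ∀ j, 0 < x₀ j)
    (h : ∀ x ∈ s, (∀ j, 0 ≤ x j) → f x ≤ f x₀) : IsLocalMaxOn f s x₀ := by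
  have hpos : ∀ᶠ x in 𝓝 x₀, ∀ j, 0 < x j := eventually_all.2 fun j =>
    ((PiLp.continuous_apply 2 _ j).tendsto x₀).eventually_const_lt (hx₀ j)
  filter_upwards [nhdsWithin_le_nhds hpos, self_mem_nhdsWithin] with x hx hxs
  exact h x hxs fun j => (hx j).le

lemma sum_mul_le_sum_mul_of_mul_deriv_eq_mul (hφc : ConcaveOn ℝ (Ici 0) φ)
    (hφ : Differentiable ℝ φ) {x₀ x : ι → ℝ} {β : ℝ} (hc : ∀ j, 0 ≤ c j)
    (hx₀ : ∀ j, 0 ≤ x₀ j) (hx : ∀ j, 0 ≤ x j) (hβ : ∀ j, c j * deriv φ (x₀ j) = β * l j)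
    (hsum : ∑ j, l j * x j = ∑ j, l j * x₀ j) :
    ∑ j, c j * φ (x j) ≤ ∑ j, c j * φ (x₀ j) :=
  calc ∑ j, c j * φ (x j) ≤ ∑ j, (c j * φ (x₀ j) + β * (l j * x j - l j * x₀ j)) :=
        sum_le_sum fun j _ => by
          have := mul_le_mul_of_nonneg_left
            (hφc.le_add_deriv_mul_sub (hx₀ j) (hx j) (hφ _)) (hc j)
          linear_combination this + (x j - x₀ j) * hβ j
    _ = ∑ j, c j * φ (x₀ j) := by
        rw [sum_add_distrib, ← mul_sum, sum_sub_distrib, hsum, sub_self, mul_zero, add_zero]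

end

theorem stmt_4_general (n : ℕ) (φ ψ : ℝ → ℝ)
    (hφC : ContDiff ℝ 2 φ)
    (hφ' : ∀ x : ℝ, 0 < deriv φ x)
    (hφ'' : ∀ x : ℝ, x ≠ 0 → x * deriv (deriv φ) x < 0)
    (hψ : ∀ y : ℝ, 0 < y → y ≤ deriv φ 0 → 0 ≤ ψ y ∧ deriv φ (ψ y) = y)
    (hψinv : ∀ x : ℝ, 0 ≤ x → ψ (deriv φ x) = x)
    (c l q : Fin n → ℝ) (hc : ∀ j, 0 < c j) (hl : ∀ j, 0 < l j)
    (hq : ∀ j, q j = l j / c j) (b : ℝ)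
    (f : EuclideanSpace ℝ (Fin n) → ℝ)
    (hf : ∀ x : EuclideanSpace ℝ (Fin n), f x = ∑ i, c i * φ (x i))
    (P : Set (EuclideanSpace ℝ (Fin n)))
    (hP : P = {x : EuclideanSpace ℝ (Fin n) | ∑ j, l j * x j = b}) :
    (∀ x₀ : EuclideanSpace ℝ (Fin n), x₀ ∈ P → (∀ j, 0 < x₀ j) →
      (∃ ε > 0, ∀ x ∈ P, ‖x - x₀‖ < ε → f x ≤ f x₀) →
      ∃ β : ℝ, 0 < β ∧ (∀ j, β * q j < deriv φ 0 ∧ x₀ j = ψ (β * q j)) ∧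
        (∑ j, l j * ψ (β * q j)) = b) ∧
    (∀ β : ℝ, 0 < β → (∀ j, β * q j < deriv φ 0) → (∑ j, l j * ψ (β * q j)) = b →
      ∀ x₀ : EuclideanSpace ℝ (Fin n), (∀ j, x₀ j = ψ (β * q j)) →
        x₀ ∈ P ∧ ∃ ε > 0, ∀ x ∈ P, ‖x - x₀‖ < ε → f x ≤ f x₀) := by
  obtain rfl : f = fun x => ∑ i, c i * φ (x i) := funext hf
  subst hP
  have hdiff : Differentiable ℝ φ := hφC.differentiable two_ne_zero
  have hanti : StrictAntiOn (deriv φ) (Ici 0) := deriv_strictAntiOn_Ici_of_deriv_deriv_neg hφC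
    fun x hx => neg_of_mul_neg_right (hφ'' x hx.ne') hx.le
  have hconc : ConcaveOn ℝ (Ici 0) φ := ((hanti.mono interior_subset).strictConcaveOn_of_deriv
    (convex_Ici 0) hdiff.continuous.continuousOn).concaveOn
  constructor
  · rintro x₀ (hx₀ : ∑ j, l j * x₀ j = b) hpos hmax
    obtain ⟨β, hβ, hkkt⟩ := exists_pos_forall_eq_mul_of_mul_eq_mul
      (fun j => mul_pos (hc j) (hφ' (x₀ j))) hl
      (mul_deriv_mul_eq_of_isLocalMaxOn hdiff hx₀ (isLocalMaxOn_iff_exists_norm_sub_lt.2 hmax))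
    have hβq j : β * q j = deriv φ (x₀ j) := by
      rw [hq, mul_div_assoc', ← hkkt, mul_div_cancel_left₀ _ (hc j).ne']
    have hx₀ψ j : x₀ j = ψ (β * q j) := by rw [hβq, hψinv _ (hpos j).le]
    refine ⟨β, hβ, fun j => ⟨?_, hx₀ψ j⟩, ?_⟩
    · rw [hβq]
      exact hanti Set.self_mem_Ici (hpos j).le (hpos j)
    · simpa only [← hx₀ψ] using hx₀
  · intro β hβ hβlt hsum x₀ hx₀
    have hψβq j := hψ _ (mul_pos hβ (by rw [hq]; exact div_pos (hl j) (hc j))) (hβlt j).le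
    have hx₀nonneg j : 0 ≤ x₀ j := hx₀ j ▸ (hψβq j).1
    have hderiv j : deriv φ (x₀ j) = β * q j := hx₀ j ▸ (hψβq j).2
    have hx₀pos j : 0 < x₀ j := (hx₀nonneg j).lt_of_ne fun h => (hβlt j).ne (by rw [← hderiv, ← h])
    have hx₀P : ∑ j, l j * x₀ j = b := by simpa only [hx₀] using hsum
    refine ⟨hx₀P, isLocalMaxOn_iff_exists_norm_sub_lt.1 <|
      isLocalMaxOn_of_forall_nonneg_le hx₀pos fun x hx hxnonneg => ?_⟩
    refine sum_mul_le_sum_mul_of_mul_deriv_eq_mul (β := β) hconc hdiff (fun j => (hc j).le)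
      hx₀nonneg hxnonneg (fun j => ?_) (hx.trans hx₀P.symm)
    rw [hderiv, hq, mul_div_assoc']
    exact mul_div_cancel₀ _ (hc j).ne'

/-- Under (A1), with `cⱼ > 0`, `lⱼ > 0` and `qⱼ = lⱼ/cⱼ`:
(i) every local maximum `x₀` of `f` on `P` with all coordinates strictly positive is of
the form `x₀ⱼ = ψ(β qⱼ)` for some `β > 0` with `β qⱼ < φ'(0)` and `∑ lⱼ ψ(β qⱼ) = b`;
(ii) conversely, any such `β` yields a local maximum `x₀` with `x₀ⱼ = ψ(β qⱼ)`. -/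
theorem stmt_4 (n : ℕ) (φ ψ : ℝ → ℝ)
    (hφC : ContDiff ℝ 2 φ)
    (hodd : ∀ x : ℝ, φ (-x) = -φ x)
    (hφ' : ∀ x : ℝ, 0 < deriv φ x)
    (hφ'' : ∀ x : ℝ, x ≠ 0 → x * deriv (deriv φ) x < 0)
    (hlim : ∃ L : ℝ, Filter.Tendsto φ Filter.atTop (nhds L))
    (hψ : ∀ y : ℝ, 0 < y → y ≤ deriv φ 0 → 0 ≤ ψ y ∧ deriv φ (ψ y) = y)
    (hψinv : ∀ x : ℝ, 0 ≤ x → ψ (deriv φ x) = x)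
    (c l q : Fin n → ℝ) (hc : ∀ j, 0 < c j) (hl : ∀ j, 0 < l j)
    (hq : ∀ j, q j = l j / c j) (b : ℝ)
    (f : EuclideanSpace ℝ (Fin n) → ℝ)
    (hf : ∀ x : EuclideanSpace ℝ (Fin n), f x = ∑ i, c i * φ (x i))
    (P : Set (EuclideanSpace ℝ (Fin n)))
    (hP : P = {x : EuclideanSpace ℝ (Fin n) | ∑ j, l j * x j = b}) :
    (∀ x₀ : EuclideanSpace ℝ (Fin n), x₀ ∈ P → (∀ j, 0 < x₀ j) →
      (∃ ε > 0, ∀ x ∈ P, ‖x - x₀‖ < ε → f x ≤ f x₀) →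
      ∃ β : ℝ, 0 < β ∧ (∀ j, β * q j < deriv φ 0 ∧ x₀ j = ψ (β * q j)) ∧
        (∑ j, l j * ψ (β * q j)) = b) ∧
    (∀ β : ℝ, 0 < β → (∀ j, β * q j < deriv φ 0) → (∑ j, l j * ψ (β * q j)) = b →
      ∀ x₀ : EuclideanSpace ℝ (Fin n), (∀ j, x₀ j = ψ (β * q j)) →
        x₀ ∈ P ∧ ∃ ε > 0, ∀ x ∈ P, ‖x - x₀‖ < ε → f x ≤ f x₀) :=
  stmt_4_general n φ ψ hφC hφ' hφ'' hψ hψinv c l q hc hl hq b f hf P hP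
end

section
/- Assume l_j > 0 for all j, the q_j > 0 are pairwise distinct, and q_n < max_{1≤j≤n−1} q_j. Then the derivative g₁'(β) = ∑_{j=1}^{n−1} l_j q_j ψ'(β q_j) − l_n q_n ψ'(β q_n) has at most two zeros on the interval (0, β_max), where β_max = φ'(0)/max_j q_j. -/
/-!
Since `ψ'(β qₙ) < 0`, the zeros of `g₁'` are the points where
`H β = ∑_{j<n} lⱼ qⱼ fⱼ β` equals `lₙ qₙ`, with `fⱼ β = ψ'(β qⱼ) / ψ'(β qₙ)`. By (A2), `fⱼ`
increases when `qⱼ > qₙ` and decreases when `qⱼ < qₙ`. For `qⱼ < qₙ < qₖ`, (A3) makes `fⱼ' / fₖ'`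
monotone, and it must be increasing: otherwise `fⱼ + ε fₖ` would be decreasing for a suitable
`ε > 0`, keeping `fₖ` bounded, whereas `fₖ` blows up at the end of its domain because
`ψ' = 1 / φ''(ψ) → -∞` at `φ'(0)` (where `φ''(0) = 0`). So the negative part of `H'` loses weight
against the positive part: `H'` changes sign at most once, from `-` to `+`. Then `H` is strictly
quasiconvex and takes each value at most twice.

`φ` is only `C²`, so the `fⱼ` need not be differentiable. But `deriv` is `0` where a function is
not differentiable, and (A3) makes each `fⱼ'` vanish at most once, so the mean value arguments only
have to avoid finitely many points.
-/

open Set Filter Topology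

theorem strictAntiOn_Icc_of_deriv_neg_off_finite {B : Set ℝ} (hB : B.Finite) {f : ℝ → ℝ}
    {a b : ℝ} (hf : ContinuousOn f (Icc a b)) (hf' : ∀ x ∈ Ioo a b \ B, deriv f x < 0) :
    StrictAntiOn f (Icc a b) := by
  induction B, hB using Set.Finite.induction_on generalizing a b with
  | empty =>
    exact strictAntiOn_of_deriv_neg (convex_Icc a b) hf fun x hx ↦
      hf' x ⟨by simpa using hx, notMem_empty x⟩
  | @insert c B _ _ ih =>
    by_cases hc : c ∈ Ioo a b
    · rw [← Icc_union_Icc_eq_Icc hc.1.le hc.2.le]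
      refine StrictAntiOn.union (ih (hf.mono (Icc_subset_Icc_right hc.2.le)) fun x hx ↦ ?_)
        (ih (hf.mono (Icc_subset_Icc_left hc.1.le)) fun x hx ↦ ?_)
        (isGreatest_Icc hc.1.le) (isLeast_Icc hc.2.le)
      · exact hf' x ⟨⟨hx.1.1, hx.1.2.trans hc.2⟩, by simp [hx.1.2.ne, hx.2]⟩
      · exact hf' x ⟨⟨hc.1.trans hx.1.1, hx.1.2⟩, by simp [hx.1.1.ne', hx.2]⟩
    · exact ih hf fun x hx ↦ hf' x ⟨hx.1, by simp [hx.2, show x ≠ c by rintro rfl; exact hc hx.1]⟩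

theorem strictMonoOn_Icc_of_deriv_pos_off_finite {B : Set ℝ} (hB : B.Finite) {f : ℝ → ℝ}
    {a b : ℝ} (hf : ContinuousOn f (Icc a b)) (hf' : ∀ x ∈ Ioo a b \ B, 0 < deriv f x) :
    StrictMonoOn f (Icc a b) := by
  have := strictAntiOn_Icc_of_deriv_neg_off_finite hB hf.neg fun x hx ↦ by
    simpa [deriv.fun_neg] using hf' x hx
  exact fun u hu v hv huv ↦ neg_lt_neg_iff.mp (this hu hv huv)

theorem strictAntiOn_add_mul_of_deriv_div_lt {f g : ℝ → ℝ} {Z : Set ℝ} {a b ε : ℝ}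
    (hZ : Z.Finite) (hf : ContinuousOn f (Icc a b)) (hg : ContinuousOn g (Icc a b))
    (hfg : ∀ t ∈ Ioo a b \ Z, deriv f t ≠ 0 ∧ 0 < deriv g t ∧ deriv f t / deriv g t < -ε) :
    StrictAntiOn (fun t ↦ f t + ε * g t) (Icc a b) := by
  refine strictAntiOn_Icc_of_deriv_neg_off_finite hZ (hf.add (continuousOn_const.mul hg))
    fun t ht ↦ ?_
  obtain ⟨hf₀, hg₀, hlt⟩ := hfg t ht
  have hgd := differentiableAt_of_deriv_ne_zero hg₀.ne'
  rw [deriv_fun_add (differentiableAt_of_deriv_ne_zero hf₀) (hgd.const_mul ε),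
    deriv_const_mul _ hgd]
  rw [div_lt_iff₀ hg₀] at hlt
  linarith

theorem StrictMonoOn.deriv_pos_of_ne_zero {f : ℝ → ℝ} {s : Set ℝ} {x : ℝ} (hf : StrictMonoOn f s)
    (hs : IsOpen s) (hx : x ∈ s) (h : deriv f x ≠ 0) : 0 < deriv f x := by
  have := hf.monotoneOn.derivWithin_nonneg (x := x)
  rw [derivWithin_of_isOpen hs hx] at this
  exact this.lt_of_ne' h

theorem StrictAntiOn.deriv_neg_of_ne_zero {f : ℝ → ℝ} {s : Set ℝ} {x : ℝ} (hf : StrictAntiOn f s)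
    (hs : IsOpen s) (hx : x ∈ s) (h : deriv f x ≠ 0) : deriv f x < 0 := by
  have := hf.antitoneOn.derivWithin_nonpos (x := x)
  rw [derivWithin_of_isOpen hs hx] at this
  exact this.lt_of_ne h

theorem lt_max_of_deriv_crosses_zero_once {H S : ℝ → ℝ} {B : Set ℝ} {x y z : ℝ}
    (hB : B.Finite) (hxy : x < y) (hyz : y < z) (hH : ContinuousOn H (Icc x z))
    (hS : ∀ t ∈ Ioo x z \ B, HasDerivAt H (S t) t)
    (hcross : ∀ σ ∈ Ioo x z \ B, ∀ τ ∈ Ioo x z \ B, σ < τ → 0 ≤ S σ → 0 < S τ) :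
    H y < max (H x) (H z) := by
  have hleft : Ioo x y \ B ⊆ Ioo x z \ B := sdiff_subset_sdiff_left (Ioo_subset_Ioo_right hyz.le)
  have hright : Ioo y z \ B ⊆ Ioo x z \ B := sdiff_subset_sdiff_left (Ioo_subset_Ioo_left hxy.le)
  by_contra! hle
  obtain ⟨σ, hσ, hSσ⟩ : ∃ σ ∈ Ioo x y \ B, 0 ≤ S σ := by
    by_contra! hneg
    have := strictAntiOn_Icc_of_deriv_neg_off_finite hB (hH.mono (Icc_subset_Icc_right hyz.le))
      fun t ht ↦ (hS t (hleft ht)).deriv ▸ hneg t ht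
    exact (this (left_mem_Icc.2 hxy.le) (right_mem_Icc.2 hxy.le) hxy).not_ge
      ((le_max_left _ _).trans hle)
  obtain ⟨τ, hτ, hSτ⟩ : ∃ τ ∈ Ioo y z \ B, S τ ≤ 0 := by
    by_contra! hpos
    have := strictMonoOn_Icc_of_deriv_pos_off_finite hB (hH.mono (Icc_subset_Icc_left hxy.le))
      fun t ht ↦ (hS t (hright ht)).deriv ▸ hpos t ht
    exact (this (left_mem_Icc.2 hyz.le) (right_mem_Icc.2 hyz.le) hyz).not_ge
      ((le_max_right _ _).trans hle)
  exact (hcross σ (hleft hσ) τ (hright hτ) (hσ.1.2.trans hτ.1.1) hSσ).not_ge hSτ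

theorem Set.InjOn.subsingleton_zero_of_div {α : Type*} {u v : α → ℝ} {s : Set α}
    (h : InjOn (fun x ↦ u x / v x) s) : {x ∈ s | u x = 0 ∨ v x = 0}.Subsingleton := by
  have hzero : ∀ x, u x = 0 ∨ v x = 0 → u x / v x = 0 := by
    rintro x (hx | hx) <;> simp [hx]
  exact fun x hx y hy ↦ h hx.1 hy.1 ((hzero x hx.2).trans (hzero y hy.2).symm)

theorem Finset.sum_pos_of_cross_lt {ι : Type*} {s : Finset ι} (p : ι → Prop) [DecidablePred p]
    {u v : ι → ℝ} (hP : ∃ k ∈ s, p k) (hN : ∃ j ∈ s, ¬p j)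
    (hu : ∀ k ∈ s, p k → 0 < u k) (hv : ∀ k ∈ s, p k → 0 < v k)
    (huv : ∀ j ∈ s, ¬p j → ∀ k ∈ s, p k → u j * v k < v j * u k)
    (h : 0 ≤ ∑ i ∈ s, u i) : 0 < ∑ i ∈ s, v i := by
  obtain ⟨k, hks, hk⟩ := hP
  obtain ⟨j, hjs, hj⟩ := hN
  rw [← sum_filter_add_sum_filter_not s p] at h ⊢
  have hA₁ : 0 < ∑ i ∈ s with p i, u i :=
    sum_pos (fun i hi ↦ hu i (mem_filter.1 hi).1 (mem_filter.1 hi).2) ⟨k, mem_filter.2 ⟨hks, hk⟩⟩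
  have hA₂ : 0 < ∑ i ∈ s with p i, v i :=
    sum_pos (fun i hi ↦ hv i (mem_filter.1 hi).1 (mem_filter.1 hi).2) ⟨k, mem_filter.2 ⟨hks, hk⟩⟩
  have hcross : (∑ i ∈ s with ¬p i, u i) * ∑ i ∈ s with p i, v i <
      (∑ i ∈ s with ¬p i, v i) * ∑ i ∈ s with p i, u i := by
    rw [sum_mul_sum, sum_mul_sum]
    refine sum_lt_sum_of_nonempty ⟨j, mem_filter.2 ⟨hjs, hj⟩⟩ fun j' hj' ↦
      sum_lt_sum_of_nonempty ⟨k, mem_filter.2 ⟨hks, hk⟩⟩ fun k' hk' ↦ ?_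
    exact huv j' (mem_filter.1 hj').1 (mem_filter.1 hj').2 k' (mem_filter.1 hk').1
      (mem_filter.1 hk').2
  nlinarith

theorem eq_or_eq_or_eq_of_lt_max {s : Set ℝ} {H : ℝ → ℝ}
    (hH : ∀ x ∈ s, ∀ y ∈ s, ∀ z ∈ s, x < y → y < z → H y < max (H x) (H z))
    {a b c : ℝ} (ha : a ∈ s) (hb : b ∈ s) (hc : c ∈ s) (hab : H a = H b) (hbc : H b = H c) :
    a = b ∨ a = c ∨ b = c := by
  grind

theorem eq_zero_of_forall_mul_neg {g : ℝ → ℝ} (hg : ContinuousAt g 0)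
    (h : ∀ x, x ≠ 0 → x * g x < 0) : g 0 = 0 := by
  refine le_antisymm (le_of_tendsto (hg.tendsto.mono_left (nhdsWithin_le_nhds (s := Ioi 0))) ?_)
    (ge_of_tendsto (hg.tendsto.mono_left (nhdsWithin_le_nhds (s := Iio 0))) ?_)
  · filter_upwards [self_mem_nhdsWithin] with x (hx : 0 < x)
    exact (neg_of_mul_neg_right (h x hx.ne') hx.le).le
  · filter_upwards [self_mem_nhdsWithin] with x (hx : x < 0)
    exact (pos_of_mul_neg_right (h x hx.ne) hx.le).le

structure NegativeWithPole (D : ℝ → ℝ) (d : ℝ) : Prop where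
  pos : 0 < d
  neg : ∀ y ∈ Ioo 0 d, D y < 0
  continuousOn : ContinuousOn D (Ioo 0 d)
  tendsto_atBot : Tendsto D (𝓝[<] d) atBot

section Inverse

variable {φ ψ : ℝ → ℝ}

theorem deriv2_neg_of_pos (hφ'' : ∀ x : ℝ, x ≠ 0 → x * deriv (deriv φ) x < 0) {x : ℝ}
    (hx : 0 < x) : deriv (deriv φ) x < 0 :=
  neg_of_mul_neg_right (hφ'' x hx.ne') hx.le

theorem strictAntiOn_deriv_of_mul_deriv2_neg (hφC : ContDiff ℝ 2 φ)
    (hφ'' : ∀ x : ℝ, x ≠ 0 → x * deriv (deriv φ) x < 0) :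
    StrictAntiOn (deriv φ) (Ici 0) := by
  refine strictAntiOn_of_deriv_neg (convex_Ici 0) (hφC.continuous_deriv one_le_two).continuousOn
    fun x hx ↦ ?_
  rw [interior_Ici] at hx
  exact deriv2_neg_of_pos hφ'' hx

theorem psi_pos (hψ : ∀ y : ℝ, 0 < y → y ≤ deriv φ 0 → 0 ≤ ψ y ∧ deriv φ (ψ y) = y)
    {y : ℝ} (hy : y ∈ Ioo 0 (deriv φ 0)) : 0 < ψ y := by
  obtain ⟨h0, hy'⟩ := hψ y hy.1 hy.2.le
  refine h0.lt_of_ne fun h ↦ hy.2.ne ?_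
  rw [← hy', ← h]

theorem neg_psi_strictMonoOn (hψ : ∀ y : ℝ, 0 < y → y ≤ deriv φ 0 → 0 ≤ ψ y ∧ deriv φ (ψ y) = y)
    (hanti : StrictAntiOn (deriv φ) (Ici 0)) :
    StrictMonoOn (fun y ↦ -ψ y) (Ioc 0 (deriv φ 0)) := by
  intro y₁ hy₁ y₂ hy₂ hlt
  obtain ⟨h₁, e₁⟩ := hψ y₁ hy₁.1 hy₁.2
  obtain ⟨h₂, e₂⟩ := hψ y₂ hy₂.1 hy₂.2
  refine neg_lt_neg (lt_of_not_ge fun hle ↦ hlt.not_ge ?_)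
  rw [← e₁, ← e₂]
  exact hanti.antitoneOn h₁ h₂ hle

theorem Iic_subset_image_neg_psi (hφ' : ∀ x : ℝ, 0 < deriv φ x)
    (hψinv : ∀ x : ℝ, 0 ≤ x → ψ (deriv φ x) = x) (hanti : StrictAntiOn (deriv φ) (Ici 0)) :
    Iic 0 ⊆ (fun y ↦ -ψ y) '' Ioc 0 (deriv φ 0) := by
  intro t ht
  have ht' : 0 ≤ -t := neg_nonneg.2 ht
  exact ⟨deriv φ (-t), ⟨hφ' _, hanti.antitoneOn self_mem_Ici ht' ht'⟩, by simp [hψinv _ ht']⟩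

theorem continuousAt_psi (hφ' : ∀ x : ℝ, 0 < deriv φ x)
    (hψ : ∀ y : ℝ, 0 < y → y ≤ deriv φ 0 → 0 ≤ ψ y ∧ deriv φ (ψ y) = y)
    (hψinv : ∀ x : ℝ, 0 ≤ x → ψ (deriv φ x) = x) (hanti : StrictAntiOn (deriv φ) (Ici 0))
    {y : ℝ} (hy : y ∈ Ioo 0 (deriv φ 0)) : ContinuousAt ψ y := by
  have hneg := (neg_psi_strictMonoOn hψ hanti).continuousAt_of_image_mem_nhds
    (Ioc_mem_nhds hy.1 hy.2) (mem_of_superset (Iic_mem_nhds (neg_neg_of_pos (psi_pos hψ hy)))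
      (Iic_subset_image_neg_psi hφ' hψinv hanti))
  simpa using hneg.fun_neg

theorem tendsto_psi_nhdsLT (hφ' : ∀ x : ℝ, 0 < deriv φ x)
    (hψ : ∀ y : ℝ, 0 < y → y ≤ deriv φ 0 → 0 ≤ ψ y ∧ deriv φ (ψ y) = y)
    (hψinv : ∀ x : ℝ, 0 ≤ x → ψ (deriv φ x) = x) (hanti : StrictAntiOn (deriv φ) (Ici 0)) :
    Tendsto ψ (𝓝[<] deriv φ 0) (𝓝[>] 0) := by
  have hψ0 : ψ (deriv φ 0) = 0 := hψinv 0 le_rfl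
  have hneg := (neg_psi_strictMonoOn hψ hanti).continuousWithinAt_left_of_image_mem_nhdsWithin
    (Ioc_mem_nhdsLE (hφ' 0)) (mem_of_superset (by simp [hψ0, self_mem_nhdsWithin])
      (Iic_subset_image_neg_psi hφ' hψinv hanti))
  refine tendsto_nhdsWithin_iff.2 ⟨?_, ?_⟩
  · simpa [hψ0] using hneg.tendsto.neg.mono_left (nhdsWithin_mono _ Iio_subset_Iic_self)
  · filter_upwards [Ioo_mem_nhdsLT (hφ' 0)] with y hy using psi_pos hψ hy

theorem hasDerivAt_psi (hφC : ContDiff ℝ 2 φ) (hφ' : ∀ x : ℝ, 0 < deriv φ x)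
    (hφ'' : ∀ x : ℝ, x ≠ 0 → x * deriv (deriv φ) x < 0)
    (hψ : ∀ y : ℝ, 0 < y → y ≤ deriv φ 0 → 0 ≤ ψ y ∧ deriv φ (ψ y) = y)
    (hψinv : ∀ x : ℝ, 0 ≤ x → ψ (deriv φ x) = x) {y : ℝ} (hy : y ∈ Ioo 0 (deriv φ 0)) :
    HasDerivAt ψ (deriv (deriv φ) (ψ y))⁻¹ y :=
  HasDerivAt.of_local_left_inverse
    (continuousAt_psi hφ' hψ hψinv (strictAntiOn_deriv_of_mul_deriv2_neg hφC hφ'') hy)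
    (hφC.differentiable_deriv_two (ψ y)).hasDerivAt (deriv2_neg_of_pos hφ'' (psi_pos hψ hy)).ne
    (eventually_of_mem (Ioo_mem_nhds hy.1 hy.2) fun z hz ↦ (hψ z hz.1 hz.2.le).2)

theorem negativeWithPole_deriv_psi (hφC : ContDiff ℝ 2 φ) (hφ' : ∀ x : ℝ, 0 < deriv φ x)
    (hφ'' : ∀ x : ℝ, x ≠ 0 → x * deriv (deriv φ) x < 0)
    (hψ : ∀ y : ℝ, 0 < y → y ≤ deriv φ 0 → 0 ≤ ψ y ∧ deriv φ (ψ y) = y)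
    (hψinv : ∀ x : ℝ, 0 ≤ x → ψ (deriv φ x) = x) :
    NegativeWithPole (deriv ψ) (deriv φ 0) := by
  have hanti := strictAntiOn_deriv_of_mul_deriv2_neg hφC hφ''
  have hcont : Continuous (deriv (deriv φ)) :=
    (ContDiff.deriv' (n := 1) hφC).continuous_deriv le_rfl
  have hderiv : ∀ y ∈ Ioo 0 (deriv φ 0), (deriv (deriv φ) (ψ y))⁻¹ = deriv ψ y :=
    fun y hy ↦ (hasDerivAt_psi hφC hφ' hφ'' hψ hψinv hy).deriv.symm
  refine ⟨hφ' 0, fun y hy ↦ ?_, fun y hy ↦ ?_, ?_⟩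
  · rw [← hderiv y hy]
    exact inv_lt_zero.2 (deriv2_neg_of_pos hφ'' (psi_pos hψ hy))
  · refine ContinuousAt.continuousWithinAt (ContinuousAt.congr ?_
      (eventually_of_mem (Ioo_mem_nhds hy.1 hy.2) hderiv))
    exact (hcont.continuousAt.comp (continuousAt_psi hφ' hψ hψinv hanti hy)).inv₀
      (deriv2_neg_of_pos hφ'' (psi_pos hψ hy)).ne
  · have hφ''0 : Tendsto (deriv (deriv φ)) (𝓝[>] 0) (𝓝[<] 0) := by
      refine tendsto_nhdsWithin_iff.2 ⟨?_, ?_⟩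
      · simpa [eq_zero_of_forall_mul_neg hcont.continuousAt hφ''] using
          (hcont.continuousAt (x := 0)).tendsto.mono_left nhdsWithin_le_nhds
      · filter_upwards [self_mem_nhdsWithin] with x hx using deriv2_neg_of_pos hφ'' hx
    exact (tendsto_inv_nhdsLT_zero.comp (hφ''0.comp (tendsto_psi_nhdsLT hφ' hψ hψinv hanti))).congr'
      (eventually_of_mem (Ioo_mem_nhdsLT (hφ' 0)) hderiv)

end Inverse

/-- `ratio D a b t` is `h(t, a, b)` of (A3) with `D = ψ'`. -/
noncomputable def ratio (D : ℝ → ℝ) (a b t : ℝ) : ℝ := D (t * a) / D (t * b)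

/-- Assumption (A2). -/
def RatioStrictMono (D : ℝ → ℝ) (d : ℝ) : Prop :=
  ∀ p q : ℝ, 0 < q → q < p → StrictMonoOn (ratio D p q) (Ioo 0 (d / p))

/-- Assumption (A3). -/
def DerivRatioQuotStrictMonotone (D : ℝ → ℝ) (d : ℝ) : Prop :=
  ∀ a b c : ℝ, 0 < a → a < b → b < c →
    StrictMonoOn (fun β ↦ deriv (ratio D a b) β / deriv (ratio D c b) β) (Ioo 0 (d / c)) ∨
    StrictAntiOn (fun β ↦ deriv (ratio D a b) β / deriv (ratio D c b) β) (Ioo 0 (d / c))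

theorem mul_mem_Ioo_of_mem_Ioo_div {d a b β : ℝ} (hb : 0 < b) (hba : b ≤ a)
    (hβ : β ∈ Ioo 0 (d / a)) : β * b ∈ Ioo 0 d := by
  have ha := hb.trans_le hba
  refine ⟨mul_pos hβ.1 hb, ?_⟩
  calc β * b ≤ β * a := by gcongr; exact hβ.1.le
    _ < d := (lt_div_iff₀ ha).1 hβ.2

theorem Ioo_div_subset_Ioo_div {d a b : ℝ} (hd : 0 ≤ d) (hb : 0 < b) (hba : b ≤ a) :
    Ioo 0 (d / a) ⊆ Ioo 0 (d / b) :=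
  Ioo_subset_Ioo_right (div_le_div_of_nonneg_left hd hb hba)

section Ratio

variable {D : ℝ → ℝ} {d : ℝ}

theorem ratio_pos (hD : ∀ y ∈ Ioo 0 d, D y < 0) {a b t : ℝ} (ha : t * a ∈ Ioo 0 d)
    (hb : t * b ∈ Ioo 0 d) : 0 < ratio D a b t :=
  div_pos_of_neg_of_neg (hD _ ha) (hD _ hb)

theorem continuousAt_ratio (hD : ∀ y ∈ Ioo 0 d, D y < 0) (hDc : ContinuousOn D (Ioo 0 d))
    {a b t : ℝ} (ha : t * a ∈ Ioo 0 d) (hb : t * b ∈ Ioo 0 d) :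
    ContinuousAt (ratio D a b) t := by
  have hcomp : ∀ c, t * c ∈ Ioo 0 d → ContinuousAt (fun s ↦ D (s * c)) t := fun c hc ↦
    (hDc.continuousAt (isOpen_Ioo.mem_nhds hc)).comp (x := t) (continuous_mul_const c).continuousAt
  exact (hcomp a ha).div (hcomp b hb) (hD _ hb).ne

theorem ratio_strictAntiOn (hD : ∀ y ∈ Ioo 0 d, D y < 0) (hA2 : RatioStrictMono D d)
    {a b : ℝ} (ha : 0 < a) (hab : a < b) : StrictAntiOn (ratio D a b) (Ioo 0 (d / b)) := by
  intro s hs t ht hst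
  have hpos : ∀ u ∈ Ioo 0 (d / b), 0 < ratio D b a u := fun u hu ↦
    ratio_pos hD (mul_mem_Ioo_of_mem_Ioo_div (ha.trans hab) le_rfl hu)
      (mul_mem_Ioo_of_mem_Ioo_div ha hab.le hu)
  simp only [ratio, ← inv_div (D (_ * b))]
  exact inv_strictAnti₀ (hpos s hs) (hA2 b a ha hab hs ht hst)

theorem tendsto_ratio_atTop (hD : NegativeWithPole D d) {a b : ℝ} (hb : 0 < b) (hba : b < a) :
    Tendsto (ratio D a b) (𝓝[<] (d / a)) atTop := by
  have ha := hb.trans hba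
  have hd := hD.pos
  have hmul : Tendsto (fun t ↦ t * a) (𝓝[<] (d / a)) (𝓝[<] d) := by
    refine tendsto_nhdsWithin_of_tendsto_nhds_of_eventually_within _ ?_ ?_
    · simpa [div_mul_cancel₀ d ha.ne'] using
        ((continuous_mul_const a).tendsto (d / a)).mono_left nhdsWithin_le_nhds
    · filter_upwards [self_mem_nhdsWithin] with t ht
      exact (lt_div_iff₀ ha).1 ht
  have hmem : d / a * b ∈ Ioo 0 d := ⟨by positivity, by
    rw [div_mul_eq_mul_div, div_lt_iff₀ ha]; exact mul_lt_mul_of_pos_left hba hd⟩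
  have hden : Tendsto (fun t ↦ (D (t * b))⁻¹) (𝓝[<] (d / a)) (𝓝 (D (d / a * b))⁻¹) :=
    ((((hD.continuousOn.continuousAt (isOpen_Ioo.mem_nhds hmem)).comp (x := d / a)
      (continuous_mul_const b).continuousAt).tendsto.mono_left nhdsWithin_le_nhds).inv₀
      (hD.neg _ hmem).ne)
  exact (hD.tendsto_atBot.comp hmul).atBot_mul_neg (inv_lt_zero.2 (hD.neg _ hmem)) hden

theorem ratio_add_mul_lt_of_strictAntiOn_deriv_div (hD : NegativeWithPole D d)
    (hA2 : RatioStrictMono D d) {a b c ε β₀ β : ℝ} (ha : 0 < a) (hab : a < b) (hbc : b < c)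
    (hanti : StrictAntiOn (fun β ↦ deriv (ratio D a b) β / deriv (ratio D c b) β) (Ioo 0 (d / c)))
    (hβ₀ : 0 < β₀) (hβ₀β : β₀ < β) (hβ : β < d / c)
    (hε : deriv (ratio D a b) β₀ / deriv (ratio D c b) β₀ = -ε) :
    ratio D a b β + ε * ratio D c b β < ratio D a b β₀ + ε * ratio D c b β₀ := by
  have hb := ha.trans hab
  have hIcc : Icc β₀ β ⊆ Ioo 0 (d / c) := Icc_subset_Ioo hβ₀ hβ
  have hcont : ∀ e, 0 < e → e ≤ c → ContinuousOn (ratio D e b) (Icc β₀ β) :=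
    fun e he hec t ht ↦ (continuousAt_ratio hD.neg hD.continuousOn
      (mul_mem_Ioo_of_mem_Ioo_div he hec (hIcc ht))
      (mul_mem_Ioo_of_mem_Ioo_div hb hbc.le (hIcc ht))).continuousWithinAt
  refine strictAntiOn_add_mul_of_deriv_div_lt hanti.injOn.subsingleton_zero_of_div.finite
    (hcont a ha (hab.trans hbc).le) (hcont c (hb.trans hbc) le_rfl) (fun t ht ↦ ?_)
    (left_mem_Icc.2 hβ₀β.le) (right_mem_Icc.2 hβ₀β.le) hβ₀β
  have htJ := hIcc (Ioo_subset_Icc_self ht.1)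
  refine ⟨fun h ↦ ht.2 ⟨htJ, Or.inl h⟩, ?_, hε ▸ hanti ⟨hβ₀, hβ₀β.trans hβ⟩ htJ ht.1.1⟩
  exact (hA2 c b hb hbc).deriv_pos_of_ne_zero isOpen_Ioo htJ fun h ↦ ht.2 ⟨htJ, Or.inr h⟩

theorem strictMonoOn_deriv_ratio_div (hD : NegativeWithPole D d) (hA2 : RatioStrictMono D d)
    (hA3 : DerivRatioQuotStrictMonotone D d) {a b c : ℝ} (ha : 0 < a) (hab : a < b) (hbc : b < c) :
    StrictMonoOn (fun β ↦ deriv (ratio D a b) β / deriv (ratio D c b) β) (Ioo 0 (d / c)) := by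
  refine (hA3 a b c ha hab hbc).resolve_right fun hanti ↦ ?_
  have hb := ha.trans hab
  have hc := hb.trans hbc
  obtain ⟨β₀, hβ₀J, hβ₀Z⟩ := ((Ioo_infinite (div_pos hD.pos hc)).sdiff
    hanti.injOn.subsingleton_zero_of_div.finite).nonempty
  have hnum : deriv (ratio D a b) β₀ < 0 :=
    (ratio_strictAntiOn hD.neg hA2 ha hab).deriv_neg_of_ne_zero isOpen_Ioo
      (Ioo_div_subset_Ioo_div hD.pos.le hb hbc.le hβ₀J) fun h ↦ hβ₀Z ⟨hβ₀J, Or.inl h⟩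
  have hden : 0 < deriv (ratio D c b) β₀ := (hA2 c b hb hbc).deriv_pos_of_ne_zero isOpen_Ioo hβ₀J
    fun h ↦ hβ₀Z ⟨hβ₀J, Or.inr h⟩
  obtain ⟨ε, hε⟩ : ∃ ε, deriv (ratio D a b) β₀ / deriv (ratio D c b) β₀ = -ε :=
    ⟨_, (neg_neg _).symm⟩
  have hεpos : 0 < ε := by linarith [hε ▸ div_neg_of_neg_of_pos hnum hden]
  obtain ⟨β, hbig, hβ₀β, hβc⟩ := ((tendsto_ratio_atTop hD hb hbc).eventually_gt_atTop
    ((ratio D a b β₀ + ε * ratio D c b β₀) / ε)).and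
      (Ioo_mem_nhdsLT hβ₀J.2 : ∀ᶠ β in 𝓝[<] (d / c), β ∈ Ioo β₀ (d / c)) |>.exists
  have hβJ : β ∈ Ioo 0 (d / c) := ⟨hβ₀J.1.trans hβ₀β, hβc⟩
  have hfβ : 0 < ratio D a b β := ratio_pos hD.neg
    (mul_mem_Ioo_of_mem_Ioo_div ha (hab.trans hbc).le hβJ)
    (mul_mem_Ioo_of_mem_Ioo_div hb hbc.le hβJ)
  rw [div_lt_iff₀ hεpos] at hbig
  linarith [ratio_add_mul_lt_of_strictAntiOn_deriv_div hD hA2 ha hab hbc hanti hβ₀J.1 hβ₀β hβc hε]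

variable {ι : Type*} {s : Finset ι} {c a : ι → ℝ} {b βmax : ℝ}

theorem sum_deriv_ratio_pos_of_nonneg (hD : NegativeWithPole D d) (hA2 : RatioStrictMono D d)
    (hA3 : DerivRatioQuotStrictMonotone D d)
    (hc : ∀ i ∈ s, 0 < c i) (ha : ∀ i ∈ s, 0 < a i) (hab : ∀ i ∈ s, a i ≠ b) (hb : 0 < b)
    (hβmax : ∀ i ∈ s, βmax ≤ d / a i) (hup : ∃ i ∈ s, b < a i) (hdown : ∃ i ∈ s, a i < b)
    {σ τ : ℝ} (hσ : σ ∈ Ioo 0 βmax) (hτ : τ ∈ Ioo 0 βmax) (hστ : σ < τ)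
    (hσ₀ : ∀ i ∈ s, deriv (ratio D (a i) b) σ ≠ 0) (hτ₀ : ∀ i ∈ s, deriv (ratio D (a i) b) τ ≠ 0)
    (hS : 0 ≤ ∑ i ∈ s, c i * deriv (ratio D (a i) b) σ) :
    0 < ∑ i ∈ s, c i * deriv (ratio D (a i) b) τ := by
  have hI : ∀ i ∈ s, Ioo 0 βmax ⊆ Ioo 0 (d / a i) := fun i hi ↦
    Ioo_subset_Ioo_right (hβmax i hi)
  have hpos : ∀ k ∈ s, b < a k → ∀ t ∈ Ioo 0 βmax, deriv (ratio D (a k) b) t ≠ 0 →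
      0 < deriv (ratio D (a k) b) t := fun k hk hbk t ht ↦
    (hA2 (a k) b hb hbk).deriv_pos_of_ne_zero isOpen_Ioo (hI k hk ht)
  refine Finset.sum_pos_of_cross_lt (fun i ↦ b < a i) hup
    (hdown.imp fun i hi ↦ ⟨hi.1, hi.2.not_gt⟩)
    (fun k hk hbk ↦ mul_pos (hc k hk) (hpos k hk hbk σ hσ (hσ₀ k hk)))
    (fun k hk hbk ↦ mul_pos (hc k hk) (hpos k hk hbk τ hτ (hτ₀ k hk))) ?_ hS
  intro j hj hbj k hk hbk
  have hjb : a j < b := (not_lt.1 hbj).lt_of_ne (hab j hj)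
  have hquot := strictMonoOn_deriv_ratio_div hD hA2 hA3 (ha j hj) hjb hbk
    (hI k hk hσ) (hI k hk hτ) hστ
  simp only at hquot
  rw [div_lt_div_iff₀ (hpos k hk hbk σ hσ (hσ₀ k hk)) (hpos k hk hbk τ hτ (hτ₀ k hk))] at hquot
  have hcjk := mul_pos (hc j hj) (hc k hk)
  nlinarith

theorem subsingleton_zero_deriv_ratio (hD : NegativeWithPole D d) (hA2 : RatioStrictMono D d)
    (hA3 : DerivRatioQuotStrictMonotone D d) (ha : ∀ i ∈ s, 0 < a i) (hab : ∀ i ∈ s, a i ≠ b)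
    (hβmax : ∀ i ∈ s, βmax ≤ d / a i) (hup : ∃ i ∈ s, b < a i) (hdown : ∃ i ∈ s, a i < b)
    {i : ι} (hi : i ∈ s) : {β ∈ Ioo 0 βmax | deriv (ratio D (a i) b) β = 0}.Subsingleton := by
  obtain ⟨i₀, hi₀, hbi₀⟩ := hup
  obtain ⟨i₁, hi₁, hi₁b⟩ := hdown
  rcases (hab i hi).lt_or_gt with hib | hbi
  · refine (strictMonoOn_deriv_ratio_div hD hA2 hA3 (ha i hi) hib hbi₀).injOn
      |>.subsingleton_zero_of_div.anti fun β hβ ↦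
        ⟨Ioo_subset_Ioo_right (hβmax i₀ hi₀) hβ.1, Or.inl hβ.2⟩
  · refine (strictMonoOn_deriv_ratio_div hD hA2 hA3 (ha i₁ hi₁) hi₁b hbi).injOn
      |>.subsingleton_zero_of_div.anti fun β hβ ↦
        ⟨Ioo_subset_Ioo_right (hβmax i hi) hβ.1, Or.inr hβ.2⟩

theorem sum_ratio_lt_max (hD : NegativeWithPole D d) (hA2 : RatioStrictMono D d)
    (hA3 : DerivRatioQuotStrictMonotone D d)
    (hc : ∀ i ∈ s, 0 < c i) (ha : ∀ i ∈ s, 0 < a i) (hab : ∀ i ∈ s, a i ≠ b) (hb : 0 < b)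
    (hβmax : ∀ i ∈ s, βmax ≤ d / a i) (hup : ∃ i ∈ s, b < a i) :
    ∀ x ∈ Ioo 0 βmax, ∀ y ∈ Ioo 0 βmax, ∀ z ∈ Ioo 0 βmax, x < y → y < z →
      ∑ i ∈ s, c i * ratio D (a i) b y <
        max (∑ i ∈ s, c i * ratio D (a i) b x) (∑ i ∈ s, c i * ratio D (a i) b z) := by
  intro x hx y hy z hz hxy hyz
  set I := Ioo 0 βmax
  have hI : ∀ i ∈ s, I ⊆ Ioo 0 (d / a i) := fun i hi ↦ Ioo_subset_Ioo_right (hβmax i hi)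
  obtain ⟨i₀, hi₀, hbi₀⟩ := hup
  by_cases hdown : ∃ i ∈ s, a i < b
  swap
  · push Not at hdown
    refine lt_max_of_lt_right (Finset.sum_lt_sum_of_nonempty ⟨i₀, hi₀⟩ fun i hi ↦ ?_)
    have hbi := (hdown i hi).lt_of_ne' (hab i hi)
    exact mul_lt_mul_of_pos_left (hA2 (a i) b hb hbi (hI i hi hy) (hI i hi hz) hyz) (hc i hi)
  obtain ⟨i₁, hi₁, hi₁b⟩ := hdown
  have hmem : ∀ t ∈ I, ∀ i ∈ s, t * a i ∈ Ioo 0 d ∧ t * b ∈ Ioo 0 d := fun t ht i hi ↦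
    ⟨mul_mem_Ioo_of_mem_Ioo_div (ha i hi) le_rfl (hI i hi ht),
      mul_mem_Ioo_of_mem_Ioo_div hb hbi₀.le (hI i₀ hi₀ ht)⟩
  set B := ⋃ i ∈ s, {β ∈ I | deriv (ratio D (a i) b) β = 0}
  have hB : B.Finite := s.finite_toSet.biUnion fun i hi ↦ (subsingleton_zero_deriv_ratio hD hA2 hA3
    ha hab hβmax ⟨i₀, hi₀, hbi₀⟩ ⟨i₁, hi₁, hi₁b⟩ hi).finite
  have hgood : ∀ t ∈ I \ B, ∀ i ∈ s, deriv (ratio D (a i) b) t ≠ 0 := fun t ht i hi h ↦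
    ht.2 (mem_iUnion₂.2 ⟨i, hi, ht.1, h⟩)
  have hxz : Ioo x z ⊆ I := Ioo_subset_Ioo hx.1.le hz.2.le
  refine lt_max_of_deriv_crosses_zero_once (H := fun t ↦ ∑ i ∈ s, c i * ratio D (a i) b t) hB
    hxy hyz (fun t ht ↦ ?_) (fun t ht ↦ ?_)
    (fun σ hσ τ hτ hστ ↦ sum_deriv_ratio_pos_of_nonneg hD hA2 hA3 hc ha hab hb
      hβmax ⟨i₀, hi₀, hbi₀⟩ ⟨i₁, hi₁, hi₁b⟩ (hxz hσ.1) (hxz hτ.1) hστ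
      (hgood σ ⟨hxz hσ.1, hσ.2⟩) (hgood τ ⟨hxz hτ.1, hτ.2⟩))
  · have htI : t ∈ I := Icc_subset_Ioo hx.1 hz.2 ht
    refine ContinuousAt.continuousWithinAt (tendsto_finsetSum s fun i hi ↦ ?_)
    exact continuousAt_const.mul
      (continuousAt_ratio hD.neg hD.continuousOn (hmem t htI i hi).1 (hmem t htI i hi).2)
  · exact HasDerivAt.fun_sum fun i hi ↦ (differentiableAt_of_deriv_ne_zero
      (hgood t ⟨hxz ht.1, ht.2⟩ i hi)).hasDerivAt.const_mul (c i)

end Ratio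

theorem stmt_6_general (n : ℕ) (φ ψ : ℝ → ℝ)
    (hφC : ContDiff ℝ 2 φ)
    (hφ' : ∀ x : ℝ, 0 < deriv φ x)
    (hφ'' : ∀ x : ℝ, x ≠ 0 → x * deriv (deriv φ) x < 0)
    (hψ : ∀ y : ℝ, 0 < y → y ≤ deriv φ 0 → 0 ≤ ψ y ∧ deriv φ (ψ y) = y)
    (hψinv : ∀ x : ℝ, 0 ≤ x → ψ (deriv φ x) = x)
    (hA2 : ∀ p q : ℝ, 0 < q → q < p →
      StrictMonoOn (fun β => deriv ψ (β * p) / deriv ψ (β * q))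
        (Set.Ioo 0 (deriv φ 0 / p)))
    (hA3 : ∀ qj qn ql : ℝ, 0 < qj → qj < qn → qn < ql →
      StrictMonoOn (fun β => deriv (fun t => deriv ψ (t * qj) / deriv ψ (t * qn)) β /
          deriv (fun t => deriv ψ (t * ql) / deriv ψ (t * qn)) β)
        (Set.Ioo 0 (deriv φ 0 / ql)) ∨
      StrictAntiOn (fun β => deriv (fun t => deriv ψ (t * qj) / deriv ψ (t * qn)) β /
          deriv (fun t => deriv ψ (t * ql) / deriv ψ (t * qn)) β)
        (Set.Ioo 0 (deriv φ 0 / ql)))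
    (l q : Fin (n + 1) → ℝ) (hl : ∀ j, 0 < l j) (hqpos : ∀ j, 0 < q j)
    (hqinj : Function.Injective q)
    (hqn : ∃ j, j ≠ Fin.last n ∧ q (Fin.last n) < q j)
    (βmax : ℝ) (hβmax : βmax = deriv φ 0 / Finset.univ.sup' Finset.univ_nonempty q)
    (G : ℝ → ℝ)
    (hG : ∀ β : ℝ, G β =
      (∑ j ∈ Finset.univ.erase (Fin.last n), l j * q j * deriv ψ (β * q j)) -
        l (Fin.last n) * q (Fin.last n) * deriv ψ (β * q (Fin.last n))) :
    ∀ β₁ ∈ Set.Ioo (0 : ℝ) βmax, ∀ β₂ ∈ Set.Ioo (0 : ℝ) βmax,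
      ∀ β₃ ∈ Set.Ioo (0 : ℝ) βmax,
      G β₁ = 0 → G β₂ = 0 → G β₃ = 0 → β₁ = β₂ ∨ β₁ = β₃ ∨ β₂ = β₃ := by
  have hD := negativeWithPole_deriv_psi hφC hφ' hφ'' hψ hψinv
  have hβ : ∀ j, βmax ≤ deriv φ 0 / q j := fun j ↦ hβmax ▸
    div_le_div_of_nonneg_left (hφ' 0).le (hqpos j) (Finset.le_sup' q (Finset.mem_univ j))
  have hlt := sum_ratio_lt_max (c := fun j ↦ l j * q j) hD hA2 hA3
    (fun j _ ↦ mul_pos (hl j) (hqpos j)) (fun j _ ↦ hqpos j)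
    (fun j hj ↦ hqinj.ne (Finset.ne_of_mem_erase hj)) (hqpos _) (fun j _ ↦ hβ j)
    (hqn.imp fun j hj ↦ ⟨Finset.mem_erase.2 ⟨hj.1, Finset.mem_univ j⟩, hj.2⟩)
  have hlevel : ∀ β ∈ Ioo 0 βmax, G β = 0 → ∑ j ∈ Finset.univ.erase (Fin.last n),
      l j * q j * ratio (deriv ψ) (q j) (q (Fin.last n)) β = l (Fin.last n) * q (Fin.last n) := by
    intro β hβI hGβ
    have hne := (hD.neg _ (mul_mem_Ioo_of_mem_Ioo_div (hqpos _) le_rfl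
      (Ioo_subset_Ioo_right (hβ (Fin.last n)) hβI))).ne
    rw [hG] at hGβ
    simp only [ratio, mul_div_assoc', ← Finset.sum_div, div_eq_iff hne]
    linarith
  intro β₁ h₁ β₂ h₂ β₃ h₃ hG₁ hG₂ hG₃
  exact eq_or_eq_or_eq_of_lt_max hlt h₁ h₂ h₃ ((hlevel β₁ h₁ hG₁).trans (hlevel β₂ h₂ hG₂).symm)
    ((hlevel β₂ h₂ hG₂).trans (hlevel β₃ h₃ hG₃).symm)

/-- Under (A1)–(A3), with `lⱼ > 0`, `qⱼ > 0` pairwise distinct and the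
last `q` not the maximal one, the function
`g₁'(β) = ∑_{j≠n} lⱼ qⱼ ψ'(β qⱼ) − lₙ qₙ ψ'(β qₙ)` has at most two zeros on
`(0, β_max)`, where `β_max = φ'(0)/max_j qⱼ`. -/
theorem stmt_6 (n : ℕ) (hn : 1 ≤ n) (φ ψ : ℝ → ℝ)
    (hφC : ContDiff ℝ 2 φ)
    (hodd : ∀ x : ℝ, φ (-x) = -φ x)
    (hφ' : ∀ x : ℝ, 0 < deriv φ x)
    (hφ'' : ∀ x : ℝ, x ≠ 0 → x * deriv (deriv φ) x < 0)
    (hlim : ∃ L : ℝ, Filter.Tendsto φ Filter.atTop (nhds L))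
    (hψ : ∀ y : ℝ, 0 < y → y ≤ deriv φ 0 → 0 ≤ ψ y ∧ deriv φ (ψ y) = y)
    (hψinv : ∀ x : ℝ, 0 ≤ x → ψ (deriv φ x) = x)
    (hA2 : ∀ p q : ℝ, 0 < q → q < p →
      StrictMonoOn (fun β => deriv ψ (β * p) / deriv ψ (β * q))
        (Set.Ioo 0 (deriv φ 0 / p)))
    (hA3 : ∀ qj qn ql : ℝ, 0 < qj → qj < qn → qn < ql →
      StrictMonoOn (fun β => deriv (fun t => deriv ψ (t * qj) / deriv ψ (t * qn)) β /
          deriv (fun t => deriv ψ (t * ql) / deriv ψ (t * qn)) β)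
        (Set.Ioo 0 (deriv φ 0 / ql)) ∨
      StrictAntiOn (fun β => deriv (fun t => deriv ψ (t * qj) / deriv ψ (t * qn)) β /
          deriv (fun t => deriv ψ (t * ql) / deriv ψ (t * qn)) β)
        (Set.Ioo 0 (deriv φ 0 / ql)))
    (l q : Fin (n + 1) → ℝ) (hl : ∀ j, 0 < l j) (hqpos : ∀ j, 0 < q j)
    (hqinj : Function.Injective q)
    (hqn : ∃ j, j ≠ Fin.last n ∧ q (Fin.last n) < q j)
    (βmax : ℝ) (hβmax : βmax = deriv φ 0 / Finset.univ.sup' Finset.univ_nonempty q)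
    (G : ℝ → ℝ)
    (hG : ∀ β : ℝ, G β =
      (∑ j ∈ Finset.univ.erase (Fin.last n), l j * q j * deriv ψ (β * q j)) -
        l (Fin.last n) * q (Fin.last n) * deriv ψ (β * q (Fin.last n))) :
    ∀ β₁ ∈ Set.Ioo (0 : ℝ) βmax, ∀ β₂ ∈ Set.Ioo (0 : ℝ) βmax,
      ∀ β₃ ∈ Set.Ioo (0 : ℝ) βmax,
      G β₁ = 0 → G β₂ = 0 → G β₃ = 0 → β₁ = β₂ ∨ β₁ = β₃ ∨ β₂ = β₃ :=
  stmt_6_general n φ ψ hφC hφ' hφ'' hψ hψinv hA2 hA3 l q hl hqpos hqinj hqn βmax hβmax G hG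
end

section
/- Assume l_j > 0 for all j, q_j > 0 for all j, and q_n > q_j for all j ≤ n−1. Then g₁'(β) = ∑_{j=1}^{n−1} l_j q_j ψ'(β q_j) − l_n q_n ψ'(β q_n) has at most one zero on (0, β_max), where β_max = φ'(0)/q_n. Moreover, if there is δ > 0 such that g₁'(β) ≥ 0 for all β ∈ (0, δ), then g₁'(β) > 0 for all β ∈ (0, β_max). -/
open scoped BigOperators


lemma psi_deriv_neg (φ ψ : ℝ → ℝ) (hφC : ContDiff ℝ 2 φ)
    (hφ' : ∀ x : ℝ, 0 < deriv φ x)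
    (hφ'' : ∀ x : ℝ, x ≠ 0 → x * deriv (deriv φ) x < 0)
    (hψ : ∀ y : ℝ, 0 < y → y ≤ deriv φ 0 → 0 ≤ ψ y ∧ deriv φ (ψ y) = y)
    (y : ℝ) (hy0 : 0 < y) (hy1 : y < deriv φ 0) : deriv ψ y < 0 := by
  have hC1 : ContDiff ℝ 1 (deriv φ) :=
    (contDiff_succ_iff_deriv.mp (show ContDiff ℝ (1+1) φ by exact_mod_cast hφC)).2.2
  have hd2 : Differentiable ℝ (deriv φ) := (contDiff_one_iff_deriv.mp hC1).1
  -- φ' strictly decreasing on [0,∞)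
  have hanti : StrictAntiOn (deriv φ) (Set.Ici 0) := by
    apply strictAntiOn_of_deriv_neg (convex_Ici 0) hd2.continuous.continuousOn
    intro x hx
    rw [interior_Ici] at hx
    have hx' : (0:ℝ) < x := hx
    have h := hφ'' x (ne_of_gt hx')
    nlinarith
  set x := ψ y with hxdef
  obtain ⟨hx0, hfx⟩ := hψ y hy0 hy1.le
  have hxpos : 0 < x := by
    rcases lt_or_eq_of_le hx0 with h | h
    · exact h
    · exfalso; rw [← h] at hfx; exact absurd hfx (by linarith)
  have hx2 : deriv (deriv φ) x < 0 := by
    have h := hφ'' x (ne_of_gt hxpos); nlinarith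
  -- continuity of ψ at y
  have hcont : ContinuousAt ψ y := by
    rw [Metric.continuousAt_iff]
    intro ε hε
    set ε' := min ε x / 2 with hε'def
    have hε'pos : 0 < ε' := by positivity
    have hε'x : ε' < x := by
      have : min ε x ≤ x := min_le_right _ _
      linarith
    have hε'ε : ε' ≤ ε := by
      have : min ε x ≤ ε := min_le_left _ _
      linarith
    have h1 : deriv φ (x + ε') < y := by
      rw [← hfx]; exact hanti (by linarith : (0:ℝ) ≤ x) (by linarith : (0:ℝ) ≤ x + ε') (by linarith)
    have h2 : y < deriv φ (x - ε') := by
      rw [← hfx]; exact hanti (by linarith : (0:ℝ) ≤ x - ε') (by linarith : (0:ℝ) ≤ x) (by linarith)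
    refine ⟨min (y - deriv φ (x + ε')) (deriv φ (x - ε') - y), lt_min (by linarith) (by linarith), ?_⟩
    intro y' hy'
    rw [Real.dist_eq] at hy' ⊢
    have hy'1 : deriv φ (x + ε') < y' := by
      have := abs_lt.mp hy'
      have := min_le_left (y - deriv φ (x + ε')) (deriv φ (x - ε') - y)
      linarith
    have hy'2 : y' < deriv φ (x - ε') := by
      have := abs_lt.mp hy'
      have := min_le_right (y - deriv φ (x + ε')) (deriv φ (x - ε') - y)
      linarith
    have hy'pos : 0 < y' := lt_trans (hφ' (x + ε')) hy'1
    have hy'le : y' ≤ deriv φ 0 := by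
      rcases eq_or_lt_of_le (by linarith : (0:ℝ) ≤ x - ε') with h | h
      · rw [← h] at hy'2; linarith
      · have := hanti (le_refl (0:ℝ)) (by linarith : (0:ℝ) ≤ x - ε') h
        linarith
    obtain ⟨hψ0, hψfx⟩ := hψ y' hy'pos hy'le
    have hlo : x - ε' < ψ y' := by
      by_contra h
      push_neg at h
      rcases eq_or_lt_of_le h with h' | h'
      · rw [h'] at hψfx; linarith
      · have := hanti hψ0 (by linarith : (0:ℝ) ≤ x - ε') h'
        rw [hψfx] at this; linarith
    have hhi : ψ y' < x + ε' := by
      by_contra h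
      push_neg at h
      rcases eq_or_lt_of_le h with h' | h'
      · rw [← h'] at hψfx; linarith
      · have := hanti (by linarith : (0:ℝ) ≤ x + ε') hψ0 h'
        rw [hψfx] at this; linarith
    rw [abs_lt]
    constructor <;> [skip; skip] <;> simp only [← hxdef] <;> linarith
  -- inverse function derivative
  have hev : ∀ᶠ y' in nhds y, deriv φ (ψ y') = y' := by
    have hmem : y ∈ Set.Ioo 0 (deriv φ 0) := ⟨hy0, hy1⟩
    filter_upwards [isOpen_Ioo.mem_nhds hmem] with y' hy'
    exact (hψ y' hy'.1 hy'.2.le).2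
  have hder : HasDerivAt ψ (deriv (deriv φ) x)⁻¹ y :=
    HasDerivAt.of_local_left_inverse hcont (hd2 x).hasDerivAt (ne_of_lt hx2) hev
  rw [hder.deriv]
  exact inv_lt_zero.mpr hx2

/-- Under (A1)–(A2), with `lⱼ > 0`, `qⱼ > 0` and `qₙ` strictly maximal,
`g₁'(β) = ∑_{j≠n} lⱼ qⱼ ψ'(β qⱼ) − lₙ qₙ ψ'(β qₙ)` has at most one zero on
`(0, β_max)` with `β_max = φ'(0)/qₙ`; moreover if `g₁' ≥ 0` near `0⁺`, then
`g₁' > 0` on all of `(0, β_max)`. -/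
theorem stmt_8 (n : ℕ) (hn : 1 ≤ n) (φ ψ : ℝ → ℝ)
    (hφC : ContDiff ℝ 2 φ)
    (hodd : ∀ x : ℝ, φ (-x) = -φ x)
    (hφ' : ∀ x : ℝ, 0 < deriv φ x)
    (hφ'' : ∀ x : ℝ, x ≠ 0 → x * deriv (deriv φ) x < 0)
    (hlim : ∃ L : ℝ, Filter.Tendsto φ Filter.atTop (nhds L))
    (hψ : ∀ y : ℝ, 0 < y → y ≤ deriv φ 0 → 0 ≤ ψ y ∧ deriv φ (ψ y) = y)
    (hψinv : ∀ x : ℝ, 0 ≤ x → ψ (deriv φ x) = x)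
    (hA2 : ∀ p q : ℝ, 0 < q → q < p →
      StrictMonoOn (fun β => deriv ψ (β * p) / deriv ψ (β * q))
        (Set.Ioo 0 (deriv φ 0 / p)))
    (l q : Fin (n + 1) → ℝ) (hl : ∀ j, 0 < l j) (hqpos : ∀ j, 0 < q j)
    (hqn : ∀ j, j ≠ Fin.last n → q j < q (Fin.last n))
    (βmax : ℝ) (hβmax : βmax = deriv φ 0 / q (Fin.last n))
    (G : ℝ → ℝ)
    (hG : ∀ β : ℝ, G β =
      (∑ j ∈ Finset.univ.erase (Fin.last n), l j * q j * deriv ψ (β * q j)) -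
        l (Fin.last n) * q (Fin.last n) * deriv ψ (β * q (Fin.last n))) :
    (∀ β₁ ∈ Set.Ioo (0 : ℝ) βmax, ∀ β₂ ∈ Set.Ioo (0 : ℝ) βmax,
        G β₁ = 0 → G β₂ = 0 → β₁ = β₂) ∧
    ((∃ δ > 0, ∀ β ∈ Set.Ioo (0 : ℝ) δ, 0 ≤ G β) →
        ∀ β ∈ Set.Ioo (0 : ℝ) βmax, 0 < G β) := by
  have hψ'neg : ∀ z : ℝ, 0 < z → z < deriv φ 0 → deriv ψ z < 0 :=
    fun z h1 h2 => psi_deriv_neg φ ψ hφC hφ' hφ'' hψ z h1 h2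
  set N := Fin.last n with hNdef
  have hqN : 0 < q N := hqpos N
  have hfact : ∀ β ∈ Set.Ioo (0:ℝ) βmax, ∀ j : Fin (n+1),
      deriv ψ (β * q j) < 0 := by
    intro β hβ j
    have hβq : β * q j ≤ β * q N := by
      rcases eq_or_ne j N with h | h
      · rw [h]
      · exact mul_le_mul_of_nonneg_left (hqn j h).le hβ.1.le
    have hβN : β * q N < deriv φ 0 := by
      have h2 := hβ.2
      rw [hβmax] at h2
      calc β * q N < (deriv φ 0 / q N) * q N := mul_lt_mul_of_pos_right h2 hqN
        _ = deriv φ 0 := div_mul_cancel₀ _ (ne_of_gt hqN)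
    exact hψ'neg _ (mul_pos hβ.1 (hqpos j)) (lt_of_le_of_lt hβq hβN)
  set c := l N * q N with hcdef
  set H : ℝ → ℝ := fun β => ∑ j ∈ Finset.univ.erase N,
      l j * q j * (deriv ψ (β * q j) / deriv ψ (β * q N)) with hHdef
  have hGH : ∀ β ∈ Set.Ioo (0:ℝ) βmax, G β = deriv ψ (β * q N) * (H β - c) := by
    intro β hβ
    have hD : deriv ψ (β * q N) ≠ 0 := ne_of_lt (hfact β hβ N)
    have hs : deriv ψ (β * q N) * H β
        = ∑ j ∈ Finset.univ.erase N, l j * q j * deriv ψ (β * q j) := by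
      simp only [hHdef]
      rw [Finset.mul_sum]
      refine Finset.sum_congr rfl fun j hj => ?_
      field_simp
    rw [hG β, mul_sub, hs, hcdef]
    ring
  have hHanti : ∀ β₁ ∈ Set.Ioo (0:ℝ) βmax, ∀ β₂ ∈ Set.Ioo (0:ℝ) βmax,
      β₁ < β₂ → H β₂ < H β₁ := by
    intro β₁ hβ₁ β₂ hβ₂ hlt
    simp only [hHdef]
    apply Finset.sum_lt_sum_of_nonempty
    · refine ⟨⟨0, by omega⟩, Finset.mem_erase.2 ⟨?_, Finset.mem_univ _⟩⟩
      refine Fin.ne_of_val_ne ?_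
      simp only [hNdef, Fin.val_last]
      omega
    · intro j hj
      have hjN : j ≠ N := (Finset.mem_erase.mp hj).1
      have hqj : q j < q N := hqn j hjN
      have hmono := hA2 (q N) (q j) (hqpos j) hqj
      rw [show deriv φ 0 / q N = βmax from hβmax.symm] at hmono
      have hr := hmono hβ₁ hβ₂ hlt
      simp only at hr
      have hr1pos : 0 < deriv ψ (β₁ * q N) / deriv ψ (β₁ * q j) :=
        div_pos_of_neg_of_neg (hfact β₁ hβ₁ N) (hfact β₁ hβ₁ j)
      have hflip : deriv ψ (β₂ * q j) / deriv ψ (β₂ * q N)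
          < deriv ψ (β₁ * q j) / deriv ψ (β₁ * q N) := by
        have h1 := one_div_lt_one_div_of_lt hr1pos hr
        rwa [one_div_div, one_div_div] at h1
      exact mul_lt_mul_of_pos_left hflip (mul_pos (hl j) (hqpos j))
  constructor
  · intro β₁ hβ₁ β₂ hβ₂ h₁ h₂
    have e : ∀ β ∈ Set.Ioo (0:ℝ) βmax, G β = 0 → H β = c := by
      intro β hβ hz
      have h := hGH β hβ
      rw [hz] at h
      rcases mul_eq_zero.mp h.symm with h' | h'
      · exact absurd h' (ne_of_lt (hfact β hβ N))
      · linarith [sub_eq_zero.mp h']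
    have e₁ := e β₁ hβ₁ h₁
    have e₂ := e β₂ hβ₂ h₂
    by_contra hne
    rcases lt_or_gt_of_ne hne with h | h
    · have := hHanti β₁ hβ₁ β₂ hβ₂ h; rw [e₁, e₂] at this; exact lt_irrefl _ this
    · have := hHanti β₂ hβ₂ β₁ hβ₁ h; rw [e₁, e₂] at this; exact lt_irrefl _ this
  · rintro ⟨δ, hδ, h0⟩ β hβ
    set β' := min β δ / 2 with hβ'def
    have hmin : 0 < min β δ := lt_min hβ.1 hδ
    have hβ'pos : 0 < β' := by rw [hβ'def]; linarith
    have hβ'δ : β' < δ := by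
      have := min_le_right β δ
      rw [hβ'def]; linarith
    have hβ'β : β' < β := by
      have := min_le_left β δ
      rw [hβ'def]; linarith [hβ.1]
    have hβ'mem : β' ∈ Set.Ioo (0:ℝ) βmax := ⟨hβ'pos, lt_trans hβ'β hβ.2⟩
    have hG' := h0 β' ⟨hβ'pos, hβ'δ⟩
    rw [hGH β' hβ'mem] at hG'
    have hD' : deriv ψ (β' * q N) < 0 := hfact β' hβ'mem N
    have hH' : H β' ≤ c := by nlinarith
    have hHβ : H β < H β' := hHanti β' hβ'mem β hβ hβ'β
    rw [hGH β hβ]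
    exact mul_pos_of_neg_of_neg (hfact β hβ N) (by linarith)
end

section
/- Let n ≥ 3, l_j > 0 for all j, and let q_j > 0 be pairwise distinct with q₁ = max_j q_j; set β_max = φ'(0)/q₁. Define g₁'(β) = ∑_{j=2}^n l_j q_j ψ'(β q_j) − l₁ q₁ ψ'(β q₁) and g₂'(β) = ∑_{j≠2} l_j q_j ψ'(β q_j) − l₂ q₂ ψ'(β q₂). If β₁, β₂ ∈ (0, β_max) satisfy g₁'(β₁) = 0 and g₂'(β₂) = 0, then β₁ > β₂. -/
open scoped BigOperators

/-- Under (A1)–(A2), with `lⱼ > 0`, `qⱼ > 0` pairwise distinct,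
`q₁` maximal, `β_max = φ'(0)/q₁`: if `β₁, β₂ ∈ (0, β_max)` satisfy
`g₁'(β₁) = 0` and `g₂'(β₂) = 0`, where
`g₁'(β) = ∑_{j≠1} lⱼ qⱼ ψ'(β qⱼ) − l₁ q₁ ψ'(β q₁)` and
`g₂'(β) = ∑_{j≠2} lⱼ qⱼ ψ'(β qⱼ) − l₂ q₂ ψ'(β q₂)`, then `β₁ > β₂`.
(Dimension is `n + 1 ≥ 3`; indices `0` and `1` play the roles of `1` and `2`.) -/
theorem stmt_12 (n : ℕ) (hn : 2 ≤ n) (φ ψ : ℝ → ℝ)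
    (hφC : ContDiff ℝ 2 φ)
    (hodd : ∀ x : ℝ, φ (-x) = -φ x)
    (hφ' : ∀ x : ℝ, 0 < deriv φ x)
    (hφ'' : ∀ x : ℝ, x ≠ 0 → x * deriv (deriv φ) x < 0)
    (hlim : ∃ L : ℝ, Filter.Tendsto φ Filter.atTop (nhds L))
    (hψ : ∀ y : ℝ, 0 < y → y ≤ deriv φ 0 → 0 ≤ ψ y ∧ deriv φ (ψ y) = y)
    (hψinv : ∀ x : ℝ, 0 ≤ x → ψ (deriv φ x) = x)
    (hψ' : ∀ y : ℝ, 0 < y → y < deriv φ 0 → deriv ψ y < 0)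
    (hA2 : ∀ p q : ℝ, 0 < q → q < p →
      StrictMonoOn (fun β => deriv ψ (β * p) / deriv ψ (β * q))
        (Set.Ioo 0 (deriv φ 0 / p)))
    (l q : Fin (n + 1) → ℝ) (hl : ∀ j, 0 < l j) (hqpos : ∀ j, 0 < q j)
    (hqinj : Function.Injective q)
    (hqmax : ∀ j : Fin (n + 1), j ≠ 0 → q j < q 0)
    (βmax : ℝ) (hβmax : βmax = deriv φ 0 / q 0)
    (G₁ G₂ : ℝ → ℝ)
    (hG₁ : ∀ β : ℝ, G₁ β =
      (∑ j ∈ Finset.univ.erase (0 : Fin (n + 1)), l j * q j * deriv ψ (β * q j)) -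
        l 0 * q 0 * deriv ψ (β * q 0))
    (hG₂ : ∀ β : ℝ, G₂ β =
      (∑ j ∈ Finset.univ.erase (1 : Fin (n + 1)), l j * q j * deriv ψ (β * q j)) -
        l 1 * q 1 * deriv ψ (β * q 1))
    (β₁ β₂ : ℝ) (hβ₁ : β₁ ∈ Set.Ioo (0 : ℝ) βmax) (hβ₂ : β₂ ∈ Set.Ioo (0 : ℝ) βmax)
    (hz₁ : G₁ β₁ = 0) (hz₂ : G₂ β₂ = 0) :
    β₂ < β₁ := by
  obtain ⟨m, rfl⟩ : ∃ m, n = m + 2 := ⟨n - 2, by omega⟩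
  -- index facts
  have h10 : (1 : Fin (m + 2 + 1)) ≠ 0 := by simp [Fin.ext_iff]
  have h20 : (2 : Fin (m + 2 + 1)) ≠ 0 := by
    simp only [Fin.ext_iff, Fin.val_zero, ne_eq]
    show ¬ ((2 : Fin (m + 3)).val = 0)
    rw [Fin.val_two]; omega
  have h21 : (2 : Fin (m + 2 + 1)) ≠ 1 := by
    simp only [Fin.ext_iff, Fin.val_one, ne_eq]
    show ¬ ((2 : Fin (m + 3)).val = 1)
    rw [Fin.val_two]; omega
  have hc : (0 : ℝ) < deriv φ 0 := hφ' 0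
  -- negativity of deriv ψ on the relevant points
  have hneg : ∀ β ∈ Set.Ioo (0 : ℝ) βmax, ∀ j, deriv ψ (β * q j) < 0 := by
    intro β hβ j
    have hβ0 : (0 : ℝ) < β := hβ.1
    have hβm : β * q 0 < deriv φ 0 := by
      have := hβ.2
      rw [hβmax, lt_div_iff₀ (hqpos 0)] at this
      exact this
    have hqle : q j ≤ q 0 := by
      rcases eq_or_ne j 0 with rfl | hj
      · exact le_refl _
      · exact (hqmax j hj).le
    have : β * q j ≤ β * q 0 := mul_le_mul_of_nonneg_left hqle hβ0.le
    exact hψ' _ (mul_pos hβ0 (hqpos j)) (lt_of_le_of_lt this hβm)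
  have A01 : deriv ψ (β₁ * q 0) < 0 := hneg β₁ hβ₁ 0
  have A11 : deriv ψ (β₁ * q 1) < 0 := hneg β₁ hβ₁ 1
  have A02 : deriv ψ (β₂ * q 0) < 0 := hneg β₂ hβ₂ 0
  have A12 : deriv ψ (β₂ * q 1) < 0 := hneg β₂ hβ₂ 1
  -- key inequality 1 : l0 q0 A0(β₁) < l1 q1 A1(β₁)
  have eq1 : (∑ j ∈ Finset.univ.erase (0 : Fin (m + 2 + 1)),
      l j * q j * deriv ψ (β₁ * q j)) = l 0 * q 0 * deriv ψ (β₁ * q 0) := by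
    have := hG₁ β₁; rw [this] at hz₁; linarith
  have mem1 : (1 : Fin (m + 2 + 1)) ∈ Finset.univ.erase (0 : Fin (m + 2 + 1)) :=
    Finset.mem_erase.mpr ⟨h10, Finset.mem_univ _⟩
  have split1 : l 1 * q 1 * deriv ψ (β₁ * q 1) +
      ∑ j ∈ (Finset.univ.erase (0 : Fin (m + 2 + 1))).erase 1,
        l j * q j * deriv ψ (β₁ * q j)
      = ∑ j ∈ Finset.univ.erase (0 : Fin (m + 2 + 1)),
        l j * q j * deriv ψ (β₁ * q j) :=
    Finset.add_sum_erase _ (fun j => l j * q j * deriv ψ (β₁ * q j)) mem1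
  have rest1 : (∑ j ∈ (Finset.univ.erase (0 : Fin (m + 2 + 1))).erase 1,
      l j * q j * deriv ψ (β₁ * q j)) < 0 := by
    apply Finset.sum_neg
    · intro i hi
      exact mul_neg_of_pos_of_neg (mul_pos (hl i) (hqpos i)) (hneg β₁ hβ₁ i)
    · exact ⟨2, Finset.mem_erase.mpr ⟨h21, Finset.mem_erase.mpr ⟨h20, Finset.mem_univ _⟩⟩⟩
  have key1 : l 0 * q 0 * deriv ψ (β₁ * q 0) < l 1 * q 1 * deriv ψ (β₁ * q 1) := by
    rw [← eq1, ← split1]; linarith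
  -- key inequality 2 : l1 q1 A1(β₂) < l0 q0 A0(β₂)
  have eq2 : (∑ j ∈ Finset.univ.erase (1 : Fin (m + 2 + 1)),
      l j * q j * deriv ψ (β₂ * q j)) = l 1 * q 1 * deriv ψ (β₂ * q 1) := by
    have := hG₂ β₂; rw [this] at hz₂; linarith
  have mem0 : (0 : Fin (m + 2 + 1)) ∈ Finset.univ.erase (1 : Fin (m + 2 + 1)) :=
    Finset.mem_erase.mpr ⟨h10.symm, Finset.mem_univ _⟩
  have split2 : l 0 * q 0 * deriv ψ (β₂ * q 0) +
      ∑ j ∈ (Finset.univ.erase (1 : Fin (m + 2 + 1))).erase 0,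
        l j * q j * deriv ψ (β₂ * q j)
      = ∑ j ∈ Finset.univ.erase (1 : Fin (m + 2 + 1)),
        l j * q j * deriv ψ (β₂ * q j) :=
    Finset.add_sum_erase _ (fun j => l j * q j * deriv ψ (β₂ * q j)) mem0
  have rest2 : (∑ j ∈ (Finset.univ.erase (1 : Fin (m + 2 + 1))).erase 0,
      l j * q j * deriv ψ (β₂ * q j)) < 0 := by
    apply Finset.sum_neg
    · intro i hi
      exact mul_neg_of_pos_of_neg (mul_pos (hl i) (hqpos i)) (hneg β₂ hβ₂ i)
    · exact ⟨2, Finset.mem_erase.mpr ⟨h20, Finset.mem_erase.mpr ⟨h21, Finset.mem_univ _⟩⟩⟩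
  have key2 : l 1 * q 1 * deriv ψ (β₂ * q 1) < l 0 * q 0 * deriv ψ (β₂ * q 0) := by
    rw [← eq2, ← split2]; linarith
  -- ratio comparison
  have hlq1 : (0 : ℝ) < l 1 * q 1 := mul_pos (hl 1) (hqpos 1)
  have h1 : l 1 * q 1 * (deriv ψ (β₁ * q 1) / deriv ψ (β₁ * q 0)) < l 0 * q 0 := by
    rw [← mul_div_assoc]
    exact (div_lt_iff_of_neg A01).mpr (by linarith)
  have h2 : l 0 * q 0 < l 1 * q 1 * (deriv ψ (β₂ * q 1) / deriv ψ (β₂ * q 0)) := by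
    rw [← mul_div_assoc]
    exact (lt_div_iff_of_neg A02).mpr (by linarith)
  have hr : deriv ψ (β₁ * q 1) / deriv ψ (β₁ * q 0) <
      deriv ψ (β₂ * q 1) / deriv ψ (β₂ * q 0) :=
    lt_of_mul_lt_mul_left (h1.trans h2) hlq1.le
  have hr1pos : 0 < deriv ψ (β₁ * q 1) / deriv ψ (β₁ * q 0) :=
    div_pos_of_neg_of_neg A11 A01
  have hinv : 1 / (deriv ψ (β₂ * q 1) / deriv ψ (β₂ * q 0)) <
      1 / (deriv ψ (β₁ * q 1) / deriv ψ (β₁ * q 0)) :=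
    one_div_lt_one_div_of_lt hr1pos hr
  rw [one_div_div, one_div_div] at hinv
  have hs := hA2 (q 0) (q 1) (hqpos 1) (hqmax 1 h10)
  have hβ₁' : β₁ ∈ Set.Ioo 0 (deriv φ 0 / q 0) := hβmax ▸ hβ₁
  have hβ₂' : β₂ ∈ Set.Ioo 0 (deriv φ 0 / q 0) := hβmax ▸ hβ₂
  exact (hs.lt_iff_lt hβ₂' hβ₁').mp hinv
end

section
/- Let q₁ > q₃ > q₂ > 0 and 0 < β₂ < β₁ with β₁·q_j < φ'(0) for j = 1,2,3. Then: (i) z₁ > z₃ > z₂; (ii) y₁ > y₃ > y₂; (iii) x₂ > x₃ > x₁ > 0. -/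
/-!
Write `m(t) = t ψ'(t) / ψ(t)` for the elasticity of `ψ`. Then `zⱼ = β₁ / m(β₁ qⱼ)` and
`yⱼ = β₂ / m(β₂ qⱼ)` with `m < 0`, so (i) and (ii) follow once `m` is strictly decreasing on
`(0, φ'(0))`. The derivative of `β ↦ ψ(βp) / ψ(βq)` is a positive multiple of `m(βp) - m(βq)`,
so (A4) makes `m` antitone; if `m` took the same value at two points it would be constant
between them, and the ratio `ψ(βp) / ψ(βq)` would be locally constant, against (A4).
Part (iii) is (A2) rearranged, using that all values of `ψ'` involved are negative.
-/

open Set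

noncomputable def elasticity (ψ : ℝ → ℝ) (t : ℝ) : ℝ := t * deriv ψ t / ψ t

lemma HasDerivAt.nonpos_of_antitoneOn_of_mem_nhds {g : ℝ → ℝ} {g' x : ℝ} {s : Set ℝ}
    (hd : HasDerivAt g g' x) (hg : AntitoneOn g s) (hs : s ∈ nhds x) : g' ≤ 0 := by
  simpa [derivWithin_of_mem_nhds hs, hd.deriv] using hg.derivWithin_nonpos (x := x)

lemma hasDerivAt_div_comp_mul {ψ : ℝ → ℝ} {β p q : ℝ} (hβ : β ≠ 0)
    (hp : DifferentiableAt ℝ ψ (β * p)) (hq : DifferentiableAt ℝ ψ (β * q))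
    (hψp : ψ (β * p) ≠ 0) (hψq : ψ (β * q) ≠ 0) :
    HasDerivAt (fun b => ψ (b * p) / ψ (b * q))
      (ψ (β * p) / ψ (β * q) / β * (elasticity ψ (β * p) - elasticity ψ (β * q))) β := by
  have hp' : HasDerivAt (fun b => ψ (b * p)) (deriv ψ (β * p) * p) β :=
    hp.hasDerivAt.comp β (hasDerivAt_mul_const p)
  have hq' : HasDerivAt (fun b => ψ (b * q)) (deriv ψ (β * q) * q) β :=
    hq.hasDerivAt.comp β (hasDerivAt_mul_const q)
  refine (hp'.fun_div hq' hψq).congr_deriv ?_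
  simp only [elasticity]
  field_simp

lemma div_mul_deriv_eq_div_elasticity (ψ : ℝ → ℝ) {β : ℝ} (hβ : β ≠ 0) (q : ℝ) :
    ψ (β * q) / (q * deriv ψ (β * q)) = β / elasticity ψ (β * q) := by
  rw [elasticity, div_div_eq_mul_div, mul_assoc, mul_div_mul_left _ _ hβ]

section

variable {ψ : ℝ → ℝ} {d : ℝ}

lemma elasticity_antitoneOn (hψ : ∀ t ∈ Ioo 0 d, 0 < ψ t) (hψ' : ∀ t ∈ Ioo 0 d, deriv ψ t < 0)
    (hA4 : ∀ p q : ℝ, 0 < q → q < p →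
      StrictAntiOn (fun β => ψ (β * p) / ψ (β * q)) (Ioo 0 (d / p))) :
    AntitoneOn (elasticity ψ) (Ioo 0 d) := by
  intro a ha b hb hab
  rcases hab.lt_or_eq with hab | rfl
  · have hF := hasDerivAt_div_comp_mul (β := 1) one_ne_zero
      (by simpa using differentiableAt_of_deriv_ne_zero (hψ' b hb).ne)
      (by simpa using differentiableAt_of_deriv_ne_zero (hψ' a ha).ne)
      (by simpa using (hψ b hb).ne') (by simpa using (hψ a ha).ne')
    have h1 : (1 : ℝ) < d / b := (one_lt_div hb.1).2 hb.2
    have := hF.nonpos_of_antitoneOn_of_mem_nhds (hA4 b a ha.1 hab).antitoneOn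
      (Ioo_mem_nhds one_pos h1)
    simp only [one_mul, div_one] at this
    linarith [nonpos_of_mul_nonpos_right this (div_pos (hψ b hb) (hψ a ha))]
  · exact le_rfl

lemma elasticity_strictAntiOn (hψ : ∀ t ∈ Ioo 0 d, 0 < ψ t)
    (hψ' : ∀ t ∈ Ioo 0 d, deriv ψ t < 0)
    (hA4 : ∀ p q : ℝ, 0 < q → q < p →
      StrictAntiOn (fun β => ψ (β * p) / ψ (β * q)) (Ioo 0 (d / p))) :
    StrictAntiOn (elasticity ψ) (Ioo 0 d) := by
  have hmono := elasticity_antitoneOn hψ hψ' hA4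
  intro a ha b hb hab
  refine (hmono ha hb hab.le).lt_of_ne fun heq => ?_
  have hsub : Icc a b ⊆ Ioo 0 d := Icc_subset_Ioo ha.1 hb.2
  have hconst : ∀ t ∈ Icc a b, elasticity ψ t = elasticity ψ a := fun t ht =>
    le_antisymm (hmono ha (hsub ht) ht.1) (heq ▸ hmono (hsub ht) hb ht.2)
  obtain ⟨c, hac, hcb⟩ := exists_between hab
  have hc : 0 < c := ha.1.trans hac
  -- on `[1, b / c]` both `β a` and `β c` stay in `[a, b]`, where the elasticity is constant
  have hF : ∀ β ∈ Icc 1 (b / c), HasDerivAt (fun β => ψ (β * c) / ψ (β * a)) 0 β := by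
    intro β hβ
    have hβc : β * c ≤ b := (le_div_iff₀ hc).1 hβ.2
    have hβa : β * a ∈ Icc a b := ⟨by nlinarith [ha.1, hβ.1], by nlinarith [ha.1, hβ.1]⟩
    have hβc' : β * c ∈ Icc a b := ⟨by nlinarith [hβ.1], hβc⟩
    have h := hasDerivAt_div_comp_mul (by linarith [hβ.1] : β ≠ 0)
      (differentiableAt_of_deriv_ne_zero (hψ' _ (hsub hβc')).ne)
      (differentiableAt_of_deriv_ne_zero (hψ' _ (hsub hβa)).ne)
      (hψ _ (hsub hβc')).ne' (hψ _ (hsub hβa)).ne'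
    rwa [hconst _ hβc', hconst _ hβa, sub_self, mul_zero] at h
  have h1 : (1 : ℝ) < b / c := (one_lt_div hc).2 hcb
  have hcd : b / c < d / c := div_lt_div_of_pos_right hb.2 hc
  have hend := constant_of_has_deriv_right_zero
    (HasDerivAt.continuousOn hF) (fun β hβ => (hF β (Ico_subset_Icc_self hβ)).hasDerivWithinAt)
    (b / c) ⟨h1.le, le_rfl⟩
  exact (hA4 c a ha.1 hac ⟨one_pos, h1.trans hcd⟩ ⟨zero_lt_one.trans h1, hcd⟩ h1).ne hend

lemma div_mul_deriv_lt_div_mul_deriv (hψ : ∀ t ∈ Ioo 0 d, 0 < ψ t)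
    (hψ' : ∀ t ∈ Ioo 0 d, deriv ψ t < 0)
    (hA4 : ∀ p q : ℝ, 0 < q → q < p →
      StrictAntiOn (fun β => ψ (β * p) / ψ (β * q)) (Ioo 0 (d / p)))
    {β p q : ℝ} (hβ : 0 < β) (hq : 0 < q) (hqp : q < p) (hp : β * p < d) :
    ψ (β * q) / (q * deriv ψ (β * q)) < ψ (β * p) / (p * deriv ψ (β * p)) := by
  have hlt : β * q < β * p := mul_lt_mul_of_pos_left hqp hβ
  have hqd : β * q ∈ Ioo 0 d := ⟨mul_pos hβ hq, hlt.trans hp⟩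
  have hpd : β * p ∈ Ioo 0 d := ⟨hqd.1.trans hlt, hp⟩
  have hneg : ∀ t ∈ Ioo 0 d, elasticity ψ t < 0 := fun t ht =>
    div_neg_of_neg_of_pos (mul_neg_of_pos_of_neg ht.1 (hψ' t ht)) (hψ t ht)
  rw [div_mul_deriv_eq_div_elasticity ψ hβ.ne', div_mul_deriv_eq_div_elasticity ψ hβ.ne',
    div_eq_mul_inv, div_eq_mul_inv]
  exact mul_lt_mul_of_pos_left ((inv_lt_inv_of_neg (hneg _ hqd) (hneg _ hpd)).2
    (elasticity_strictAntiOn hψ hψ' hA4 hqd hpd hlt)) hβ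

lemma mul_deriv_div_mul_deriv_lt (hψ' : ∀ t ∈ Ioo 0 d, deriv ψ t < 0)
    (hA2 : ∀ p q : ℝ, 0 < q → q < p →
      StrictMonoOn (fun β => deriv ψ (β * p) / deriv ψ (β * q)) (Ioo 0 (d / p)))
    {β₁ β₂ p q : ℝ} (hβ₂ : 0 < β₂) (hβ : β₂ < β₁) (hq : 0 < q) (hqp : q < p)
    (hp : β₁ * p < d) :
    p * deriv ψ (β₂ * p) / (p * deriv ψ (β₁ * p)) <
      q * deriv ψ (β₂ * q) / (q * deriv ψ (β₁ * q)) := by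
  have hβ₁ : 0 < β₁ := hβ₂.trans hβ
  have hpd : β₁ ∈ Ioo 0 (d / p) := ⟨hβ₁, (lt_div_iff₀ (hq.trans hqp)).2 hp⟩
  have hA := hA2 p q hq hqp ⟨hβ₂, hβ.trans hpd.2⟩ hpd hβ
  have hqd : β₁ * q < d := (mul_lt_mul_of_pos_left hqp hβ₁).trans hp
  have hB : deriv ψ (β₂ * q) < 0 :=
    hψ' _ ⟨mul_pos hβ₂ hq, (mul_lt_mul_of_pos_right hβ hq).trans hqd⟩
  have hC : deriv ψ (β₁ * p) < 0 := hψ' _ ⟨mul_pos hβ₁ (hq.trans hqp), hp⟩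
  rw [mul_div_mul_left _ _ (hq.trans hqp).ne', mul_div_mul_left _ _ hq.ne']
  calc deriv ψ (β₂ * p) / deriv ψ (β₁ * p)
      = deriv ψ (β₂ * p) / deriv ψ (β₂ * q) * (deriv ψ (β₂ * q) / deriv ψ (β₁ * p)) := by
        field_simp [hB.ne]
    _ < deriv ψ (β₁ * p) / deriv ψ (β₁ * q) * (deriv ψ (β₂ * q) / deriv ψ (β₁ * p)) :=
        mul_lt_mul_of_pos_right hA (div_pos_of_neg_of_neg hB hC)
    _ = deriv ψ (β₂ * q) / deriv ψ (β₁ * q) := by field_simp [hC.ne]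

end

theorem stmt_13_general (φ ψ : ℝ → ℝ)
    (hψ : ∀ y : ℝ, 0 < y → y ≤ deriv φ 0 → 0 ≤ ψ y ∧ deriv φ (ψ y) = y)
    (hψ' : ∀ y : ℝ, 0 < y → y < deriv φ 0 → deriv ψ y < 0)
    (hA2 : ∀ p q : ℝ, 0 < q → q < p →
      StrictMonoOn (fun β => deriv ψ (β * p) / deriv ψ (β * q))
        (Set.Ioo 0 (deriv φ 0 / p)))
    (hA4 : ∀ p q : ℝ, 0 < q → q < p →
      StrictAntiOn (fun β => ψ (β * p) / ψ (β * q))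
        (Set.Ioo 0 (deriv φ 0 / p)))
    (q₁ q₂ q₃ β₁ β₂ : ℝ)
    (hq2 : 0 < q₂) (hq32 : q₂ < q₃) (hq13 : q₃ < q₁)
    (hβ2 : 0 < β₂) (hβ21 : β₂ < β₁)
    (hdom1 : β₁ * q₁ < deriv φ 0)
    (hdom3 : β₁ * q₃ < deriv φ 0)
    (x₁ x₂ x₃ y₁ y₂ y₃ z₁ z₂ z₃ : ℝ)
    (hx₁ : x₁ = (q₁ * deriv ψ (β₂ * q₁)) / (q₁ * deriv ψ (β₁ * q₁)))
    (hx₂ : x₂ = (q₂ * deriv ψ (β₂ * q₂)) / (q₂ * deriv ψ (β₁ * q₂)))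
    (hx₃ : x₃ = (q₃ * deriv ψ (β₂ * q₃)) / (q₃ * deriv ψ (β₁ * q₃)))
    (hy₁ : y₁ = ψ (β₂ * q₁) / (q₁ * deriv ψ (β₂ * q₁)))
    (hy₂ : y₂ = ψ (β₂ * q₂) / (q₂ * deriv ψ (β₂ * q₂)))
    (hy₃ : y₃ = ψ (β₂ * q₃) / (q₃ * deriv ψ (β₂ * q₃)))
    (hz₁ : z₁ = ψ (β₁ * q₁) / (q₁ * deriv ψ (β₁ * q₁)))
    (hz₂ : z₂ = ψ (β₁ * q₂) / (q₂ * deriv ψ (β₁ * q₂)))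
    (hz₃ : z₃ = ψ (β₁ * q₃) / (q₃ * deriv ψ (β₁ * q₃))) :
    (z₂ < z₃ ∧ z₃ < z₁) ∧ (y₂ < y₃ ∧ y₃ < y₁) ∧ (0 < x₁ ∧ x₁ < x₃ ∧ x₃ < x₂) := by
  have hψpos : ∀ t ∈ Ioo 0 (deriv φ 0), 0 < ψ t := fun t ht => by
    obtain ⟨hnonneg, hinv⟩ := hψ t ht.1 ht.2.le
    refine hnonneg.lt_of_ne fun h => ?_
    rw [← h] at hinv
    exact ht.2.ne hinv.symm
  have hψ'' : ∀ t ∈ Ioo 0 (deriv φ 0), deriv ψ t < 0 := fun t ht => hψ' t ht.1 ht.2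
  have hq₃ : 0 < q₃ := hq2.trans hq32
  have hq₁ : 0 < q₁ := hq₃.trans hq13
  have hdom (q : ℝ) (hq : 0 < q) (h : β₁ * q < deriv φ 0) : β₂ * q < deriv φ 0 :=
    (mul_lt_mul_of_pos_right hβ21 hq).trans h
  subst hx₁ hx₂ hx₃ hy₁ hy₂ hy₃ hz₁ hz₂ hz₃
  refine ⟨⟨?_, ?_⟩, ⟨?_, ?_⟩, ?_, ?_, ?_⟩
  · exact div_mul_deriv_lt_div_mul_deriv hψpos hψ'' hA4 (hβ2.trans hβ21) hq2 hq32 hdom3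
  · exact div_mul_deriv_lt_div_mul_deriv hψpos hψ'' hA4 (hβ2.trans hβ21) hq₃ hq13 hdom1
  · exact div_mul_deriv_lt_div_mul_deriv hψpos hψ'' hA4 hβ2 hq2 hq32 (hdom q₃ hq₃ hdom3)
  · exact div_mul_deriv_lt_div_mul_deriv hψpos hψ'' hA4 hβ2 hq₃ hq13 (hdom q₁ hq₁ hdom1)
  · exact div_pos_of_neg_of_neg
      (mul_neg_of_pos_of_neg hq₁ (hψ' _ (mul_pos hβ2 hq₁) (hdom q₁ hq₁ hdom1)))
      (mul_neg_of_pos_of_neg hq₁ (hψ' _ (mul_pos (hβ2.trans hβ21) hq₁) hdom1))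
  · exact mul_deriv_div_mul_deriv_lt hψ'' hA2 hβ2 hβ21 hq₃ hq13 hdom1
  · exact mul_deriv_div_mul_deriv_lt hψ'' hA2 hβ2 hβ21 hq2 hq32 hdom3

/-- Under (A1), (A2), (A4), with `q₁ > q₃ > q₂ > 0` and
`0 < β₂ < β₁`, `β₁ qⱼ < φ'(0)`, for `xⱼ = ψ_β(β₂,qⱼ)/ψ_β(β₁,qⱼ)`,
`yⱼ = ψ(β₂ qⱼ)/ψ_β(β₂,qⱼ)`, `zⱼ = ψ(β₁ qⱼ)/ψ_β(β₁,qⱼ)` with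
`ψ_β(β,q) = q ψ'(βq)`, one has (i) `z₁ > z₃ > z₂`, (ii) `y₁ > y₃ > y₂`,
(iii) `x₂ > x₃ > x₁ > 0`. -/
theorem stmt_13 (φ ψ : ℝ → ℝ)
    (hφC : ContDiff ℝ 2 φ)
    (hodd : ∀ x : ℝ, φ (-x) = -φ x)
    (hφ' : ∀ x : ℝ, 0 < deriv φ x)
    (hφ'' : ∀ x : ℝ, x ≠ 0 → x * deriv (deriv φ) x < 0)
    (hlim : ∃ L : ℝ, Filter.Tendsto φ Filter.atTop (nhds L))
    (hψ : ∀ y : ℝ, 0 < y → y ≤ deriv φ 0 → 0 ≤ ψ y ∧ deriv φ (ψ y) = y)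
    (hψinv : ∀ x : ℝ, 0 ≤ x → ψ (deriv φ x) = x)
    (hψ' : ∀ y : ℝ, 0 < y → y < deriv φ 0 → deriv ψ y < 0)
    (hA2 : ∀ p q : ℝ, 0 < q → q < p →
      StrictMonoOn (fun β => deriv ψ (β * p) / deriv ψ (β * q))
        (Set.Ioo 0 (deriv φ 0 / p)))
    (hA4 : ∀ p q : ℝ, 0 < q → q < p →
      StrictAntiOn (fun β => ψ (β * p) / ψ (β * q))
        (Set.Ioo 0 (deriv φ 0 / p)))
    (q₁ q₂ q₃ β₁ β₂ : ℝ)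
    (hq2 : 0 < q₂) (hq32 : q₂ < q₃) (hq13 : q₃ < q₁)
    (hβ2 : 0 < β₂) (hβ21 : β₂ < β₁)
    (hdom1 : β₁ * q₁ < deriv φ 0) (hdom2 : β₁ * q₂ < deriv φ 0)
    (hdom3 : β₁ * q₃ < deriv φ 0)
    (x₁ x₂ x₃ y₁ y₂ y₃ z₁ z₂ z₃ : ℝ)
    (hx₁ : x₁ = (q₁ * deriv ψ (β₂ * q₁)) / (q₁ * deriv ψ (β₁ * q₁)))
    (hx₂ : x₂ = (q₂ * deriv ψ (β₂ * q₂)) / (q₂ * deriv ψ (β₁ * q₂)))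
    (hx₃ : x₃ = (q₃ * deriv ψ (β₂ * q₃)) / (q₃ * deriv ψ (β₁ * q₃)))
    (hy₁ : y₁ = ψ (β₂ * q₁) / (q₁ * deriv ψ (β₂ * q₁)))
    (hy₂ : y₂ = ψ (β₂ * q₂) / (q₂ * deriv ψ (β₂ * q₂)))
    (hy₃ : y₃ = ψ (β₂ * q₃) / (q₃ * deriv ψ (β₂ * q₃)))
    (hz₁ : z₁ = ψ (β₁ * q₁) / (q₁ * deriv ψ (β₁ * q₁)))
    (hz₂ : z₂ = ψ (β₁ * q₂) / (q₂ * deriv ψ (β₁ * q₂)))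
    (hz₃ : z₃ = ψ (β₁ * q₃) / (q₃ * deriv ψ (β₁ * q₃))) :
    (z₂ < z₃ ∧ z₃ < z₁) ∧ (y₂ < y₃ ∧ y₃ < y₁) ∧ (0 < x₁ ∧ x₁ < x₃ ∧ x₃ < x₂) :=
  stmt_13_general φ ψ hψ hψ' hA2 hA4 q₁ q₂ q₃ β₁ β₂ hq2 hq32 hq13 hβ2 hβ21 hdom1 hdom3 x₁ x₂ x₃ y₁
    y₂ y₃ z₁ z₂ z₃ hx₁ hx₂ hx₃ hy₁ hy₂ hy₃ hz₁ hz₂ hz₃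
end
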